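/- arXiv:2007.02195 — 5 statements merged into one kernel-verified Lean document; each statement's English description precedes it below -/
import Mathlib

section
/- As T → ∞, the distance-like functions d_T converge in L²(μ×μ) norm to a function d_∞ that is invariant under the product Koopman operator U^t ⊗ U^t (i.e. d_∞(Φ^t(x), Φ^t(x')) = d_∞(x, x') for μ×μ-a.e. (x,x') and every t ∈ ℝ); correspondingly, the kernels k_T = h ∘ d_T² converge in L²(μ×μ) norm to a U^t ⊗ U^t-invariant kernel k_∞. -/
open MeasureTheory Filter Topology

private lemma aux_abs_sqrt_sub_sqrt_le {a b : ℝ} (ha : 0 ≤ a) (hb : 0 ≤ b) :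
    |Real.sqrt a - Real.sqrt b| ≤ Real.sqrt |a - b| := by
  wlog hab : b ≤ a generalizing a b
  · rw [abs_sub_comm, abs_sub_comm a b]; exact this hb ha (le_of_not_ge hab)
  have hkey : Real.sqrt a ≤ Real.sqrt b + Real.sqrt (a - b) := by
    have h1 : a ≤ (Real.sqrt b + Real.sqrt (a - b)) ^ 2 := by
      have e1 := Real.sq_sqrt hb
      have e2 := Real.sq_sqrt (sub_nonneg.2 hab)
      nlinarith [Real.sqrt_nonneg b, Real.sqrt_nonneg (a - b)]
    calc Real.sqrt a ≤ Real.sqrt ((Real.sqrt b + Real.sqrt (a - b)) ^ 2) :=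
          Real.sqrt_le_sqrt h1
      _ = Real.sqrt b + Real.sqrt (a - b) := Real.sqrt_sq (by positivity)
  rw [abs_of_nonneg (sub_nonneg.2 (Real.sqrt_le_sqrt hab)), abs_of_nonneg (sub_nonneg.2 hab)]
  linarith

private lemma aux_tendsto_rpow_half_zero {α : Type*} {l : Filter α} {f : α → ENNReal}
    (hf : Tendsto f l (nhds 0)) : Tendsto (fun x => f x ^ (1/2 : ℝ)) l (nhds 0) := by
  rw [ENNReal.tendsto_nhds_zero] at hf ⊢
  intro ε hε
  rcases eq_or_ne ε ⊤ with rfl | hεtop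
  · exact Eventually.of_forall fun _ => le_top
  have hε2 : 0 < ε ^ (2 : ℝ) := ENNReal.rpow_pos hε hεtop
  filter_upwards [hf _ hε2] with x hx
  calc f x ^ (1/2 : ℝ) ≤ (ε ^ (2:ℝ)) ^ (1/2 : ℝ) := ENNReal.rpow_le_rpow hx (by norm_num)
    _ = ε := by rw [← ENNReal.rpow_mul]; norm_num

private lemma aux_coeFn_finset_sum {α : Type*} [MeasurableSpace α] {μ : Measure α}
    (s : Finset ℕ) (f : ℕ → Lp ℝ 2 μ) :
    ⇑(∑ k ∈ s, f k) =ᵐ[μ] fun p => ∑ k ∈ s, (f k : α → ℝ) p := by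
  classical
  induction s using Finset.induction_on with
  | empty => simp only [Finset.sum_empty]; exact Lp.coeFn_zero (E := ℝ) (p := 2) (μ := μ)
  | insert a s' hk ih =>
      rw [Finset.sum_insert hk]
      filter_upwards [Lp.coeFn_add (f a) (∑ k ∈ s', f k), ih] with p h1 h2
      simp only [Finset.sum_insert hk, h1, Pi.add_apply, h2]

private lemma aux_eLpNorm_sqrt_le {α : Type*} [MeasurableSpace α] {μ : Measure α}
    [IsProbabilityMeasure μ] {f g : α → ℝ} (hg : AEStronglyMeasurable g μ)
    (hfg : ∀ᵐ x ∂μ, |f x| ^ 2 ≤ |g x|) :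
    eLpNorm f 2 μ ≤ (eLpNorm g 2 μ) ^ (1/2 : ℝ) := by
  have h2 : eLpNorm f 2 μ = (∫⁻ x, ((‖f x‖₊ : ENNReal)) ^ (2:ℝ) ∂μ) ^ (1/(2:ℝ)) := by
    rw [eLpNorm_eq_lintegral_rpow_enorm_toReal (by norm_num) (by norm_num)]
    simp only [ENNReal.toReal_ofNat, enorm_eq_nnnorm]
  rw [h2]
  have hle : (∫⁻ x, ((‖f x‖₊ : ENNReal)) ^ (2:ℝ) ∂μ) ≤ ∫⁻ x, (‖g x‖₊ : ENNReal) ∂μ := by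
    refine lintegral_mono_ae ?_
    filter_upwards [hfg] with x hx
    rw [← enorm_eq_nnnorm, ← enorm_eq_nnnorm, Real.enorm_eq_ofReal_abs, Real.enorm_eq_ofReal_abs,
      ENNReal.ofReal_rpow_of_nonneg (abs_nonneg _) (by norm_num)]
    apply ENNReal.ofReal_le_ofReal
    rw [show ((2:ℝ)) = ((2:ℕ):ℝ) by norm_num, Real.rpow_natCast]
    exact hx
  calc (∫⁻ x, ((‖f x‖₊ : ENNReal)) ^ (2:ℝ) ∂μ) ^ (1/(2:ℝ))
      ≤ (∫⁻ x, (‖g x‖₊ : ENNReal) ∂μ) ^ (1/(2:ℝ)) := ENNReal.rpow_le_rpow hle (by norm_num)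
    _ = (eLpNorm g 1 μ) ^ (1/(2:ℝ)) := by simp only [eLpNorm_one_eq_lintegral_enorm, enorm_eq_nnnorm]
    _ ≤ (eLpNorm g 2 μ) ^ (1/(2:ℝ)) :=
        ENNReal.rpow_le_rpow (eLpNorm_le_eLpNorm_of_exponent_le (by norm_num) hg) (by norm_num)

set_option maxHeartbeats 1600000
/-- As `T → ∞`, the distance-like functions `d_T` converge in `L²(μ×μ)` norm to
a function `d_∞` that is invariant under the product Koopman operator `U^t ⊗ U^t` (i.e.
`d_∞(Φ^t(x), Φ^t(x')) = d_∞(x, x')` for `μ×μ`-a.e. `(x,x')` and every `t ∈ ℝ`); correspondingly,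
the kernels `k_T = h ∘ d_T²` converge in `L²(μ×μ)` norm to a `U^t ⊗ U^t`-invariant kernel
`k_∞`. -/
theorem delay_distance_and_kernel_limits
    {Ω : Type*} [MeasurableSpace Ω] [MetricSpace Ω] [BorelSpace Ω]
    {Y : Type*} [NormedAddCommGroup Y]
    (μ : Measure Ω) [IsProbabilityMeasure μ]
    (Φ : ℝ → Ω → Ω)
    (hΦcont : Continuous fun p : ℝ × Ω => Φ p.1 p.2)
    (hΦ0 : Φ 0 = id)
    (hΦadd : ∀ s t : ℝ, Φ (s + t) = Φ s ∘ Φ t)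
    (hΦmp : ∀ t : ℝ, MeasurePreserving (Φ t) μ μ)
    (hErg : ∀ s : Set Ω, MeasurableSet s → (∀ t : ℝ, Φ t ⁻¹' s = s) → μ s = 0 ∨ μ s = 1)
    (X : Set Ω) (hXcomp : IsCompact X) (hXsupp : μ Xᶜ = 0)
    (hXinv : ∀ t : ℝ, Set.MapsTo (Φ t) X X)
    (M : Set Ω) (hMcomp : IsCompact M) (hXM : X ⊆ M)
    (hMinv : ∀ t : ℝ, 0 ≤ t → Set.MapsTo (Φ t) M M)
    (F : Ω → Y) (hF : Continuous F)
    (d : Ω → Ω → ℝ) (hd : ∀ x x', d x x' = ‖F x - F x'‖)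
    (dT2 : ℝ → Ω → Ω → ℝ)
    (hdT2 : ∀ (T : ℝ) (x x'), dT2 T x x' =
      (1 / T) * ∫ s in (0:ℝ)..T, (d (Φ s x) (Φ s x')) ^ 2)
    (dT : ℝ → Ω → Ω → ℝ)
    (hdT : ∀ (T : ℝ) (x x'), dT T x x' = Real.sqrt (dT2 T x x'))
    (h : ℝ → ℝ) (hhpos : ∀ u : ℝ, 0 ≤ u → 0 < h u)
    (hhC1 : ContDiff ℝ 1 h)
    (hhbdd : ∃ C, ∀ u : ℝ, 0 ≤ u → |h u| ≤ C)
    (hh'bdd : ∃ C, ∀ u : ℝ, 0 ≤ u → |deriv h u| ≤ C)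
    (kT : ℝ → Ω → Ω → ℝ) (hkT : ∀ (T : ℝ) (x x'), kT T x x' = h (dT2 T x x')) :
    ∃ dInf kInf : Ω × Ω → ℝ,
      -- d_T → d_∞ in L²(μ×μ)
      Tendsto (fun T : ℝ =>
          eLpNorm (fun p : Ω × Ω => dT T p.1 p.2 - dInf p) 2 (μ.prod μ))
        atTop (𝓝 0) ∧
      -- d_∞ is invariant under U^t ⊗ U^t
      (∀ t : ℝ, ∀ᵐ p ∂(μ.prod μ), dInf (Φ t p.1, Φ t p.2) = dInf p) ∧
      -- k_T → k_∞ in L²(μ×μ)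
      Tendsto (fun T : ℝ =>
          eLpNorm (fun p : Ω × Ω => kT T p.1 p.2 - kInf p) 2 (μ.prod μ))
        atTop (𝓝 0) ∧
      -- k_∞ is invariant under U^t ⊗ U^t
      (∀ t : ℝ, ∀ᵐ p ∂(μ.prod μ), kInf (Φ t p.1, Φ t p.2) = kInf p) := by
  clear hErg hMcomp hXM hMinv hhbdd
  set ν : Measure (Ω × Ω) := μ.prod μ with hν
  set Ψ : ℝ → Ω × Ω → Ω × Ω := fun t p => (Φ t p.1, Φ t p.2) with hΨ
  have hΨmp : ∀ t, MeasurePreserving (Ψ t) ν ν := fun t => (hΦmp t).prod (hΦmp t)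
  have hΨc : Continuous fun q : ℝ × (Ω × Ω) => Ψ q.1 q.2 := by
    apply Continuous.prodMk
    · exact hΦcont.comp (continuous_fst.prodMk (continuous_snd.fst))
    · exact hΦcont.comp (continuous_fst.prodMk (continuous_snd.snd))
  have hΨadd : ∀ s t : ℝ, ∀ p, Ψ (s + t) p = Ψ s (Ψ t p) := by
    intro s t p
    simp only [hΨ, hΦadd s t, Function.comp_apply]
  have hΨ0 : ∀ p, Ψ 0 p = p := by intro p; simp [hΨ, hΦ0]
  set g : Ω × Ω → ℝ := fun p => ‖F p.1 - F p.2‖ ^ 2 with hg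
  have hgc : Continuous g := ((hF.comp continuous_fst).sub (hF.comp continuous_snd)).norm.pow 2
  have hgnn : ∀ p, 0 ≤ g p := fun p => by positivity
  obtain ⟨K, hK⟩ := hXcomp.exists_bound_of_continuousOn hF.continuousOn
  set B : ℝ := (2 * max K 0) ^ 2 with hB
  have hB0 : 0 ≤ B := by positivity
  set S : Set (Ω × Ω) := X ×ˢ X with hS
  have hSg : ∀ p ∈ S, g p ≤ B := by
    intro p hp
    have h1 : ‖F p.1 - F p.2‖ ≤ 2 * max K 0 := by
      calc ‖F p.1 - F p.2‖ ≤ ‖F p.1‖ + ‖F p.2‖ := norm_sub_le _ _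
        _ ≤ max K 0 + max K 0 := by
            gcongr
            · exact le_trans (hK p.1 hp.1) (le_max_left _ _)
            · exact le_trans (hK p.2 hp.2) (le_max_left _ _)
        _ = 2 * max K 0 := by ring
    calc g p = ‖F p.1 - F p.2‖ ^ 2 := rfl
      _ ≤ (2 * max K 0) ^ 2 := pow_le_pow_left₀ (norm_nonneg _) h1 2
      _ = B := rfl
  have hSinv : ∀ t : ℝ, ∀ p ∈ S, Ψ t p ∈ S := fun t p hp => ⟨hXinv t hp.1, hXinv t hp.2⟩
  have hSae : ∀ᵐ p ∂ν, p ∈ S := by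
    have hXm : MeasurableSet X := hXcomp.isClosed.measurableSet
    have hc : ν Sᶜ = 0 := by
      rw [hS, Set.compl_prod_eq_union]
      refine le_antisymm (le_trans (measure_union_le _ _) ?_) zero_le
      rw [hν, Measure.prod_prod, Measure.prod_prod, hXsupp]
      simp
    exact mem_ae_iff.mpr hc
  have hgb : ∀ p ∈ S, ∀ s : ℝ, g (Ψ s p) ≤ B := fun p hp s => hSg _ (hSinv s p hp)
  have hXm : MeasurableSet X := hXcomp.isClosed.measurableSet
  have hASM : ∀ c : Ω × Ω → ℝ, Continuous c → AEStronglyMeasurable c ν := by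
    intro c hc
    haveI : TopologicalSpace.SeparableSpace X := hXcomp.isSeparable.separableSpace
    haveI : SecondCountableTopology X := UniformSpace.secondCountable_of_separable X
    have hemb : MeasurableEmbedding (Prod.map (Subtype.val : X → Ω) (Subtype.val : X → Ω)) :=
      (MeasurableEmbedding.subtype_coe hXm).prodMap (MeasurableEmbedding.subtype_coe hXm)
    have hcm : Measurable (c ∘ Prod.map (Subtype.val : X → Ω) (Subtype.val : X → Ω)) :=
      (hc.comp (continuous_subtype_val.prodMap continuous_subtype_val)).measurable
    obtain ⟨c₀, hc₀m, hc₀e⟩ := hemb.exists_measurable_extend hcm (fun _ => ⟨0⟩)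
    refine ⟨c₀, hc₀m.stronglyMeasurable, ?_⟩
    filter_upwards [hSae] with p hp
    exact (congrFun hc₀e ((⟨p.1, hp.1⟩, ⟨p.2, hp.2⟩) : X × X)).symm
  -- the time averages
  set G : ℝ → Ω × Ω → ℝ := fun T p => (1 / T) * ∫ s in (0:ℝ)..T, g (Ψ s p) with hG
  have hGc : ∀ T, Continuous (G T) := by
    intro T
    have hu : Continuous (Function.uncurry fun (p : Ω × Ω) (s : ℝ) => g (Ψ s p)) :=
      hgc.comp (hΨc.comp (continuous_snd.prodMk continuous_fst))
    exact continuous_const.mul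
      (intervalIntegral.continuous_parametric_intervalIntegral_of_continuous' hu 0 T)
  have hintg : ∀ (p : Ω × Ω) (a b : ℝ),
      IntervalIntegrable (fun s => g (Ψ s p)) MeasureTheory.volume a b := by
    intro p a b
    exact (hgc.comp (hΨc.comp (continuous_id.prodMk continuous_const))).intervalIntegrable a b
  have hdT2G : ∀ (T : ℝ) (x x'), dT2 T x x' = G T (x, x') := by
    intro T x x'
    rw [hdT2, hG]
    simp only
    congr 1
    refine intervalIntegral.integral_congr fun s _ => ?_
    rw [hd]
  have hGb : ∀ T : ℝ, 1 ≤ T → ∀ p ∈ S, |G T p| ≤ B := by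
    intro T hT p hp
    have hT0 : 0 < T := lt_of_lt_of_le one_pos hT
    have h1 : |∫ s in (0:ℝ)..T, g (Ψ s p)| ≤ B * |T - 0| := by
      rw [← Real.norm_eq_abs]
      apply intervalIntegral.norm_integral_le_of_norm_le_const
      intro s _
      rw [Real.norm_eq_abs, abs_of_nonneg (hgnn _)]
      exact hgb p hp s
    rw [hG]
    simp only
    rw [abs_mul, abs_of_nonneg (by positivity : (0:ℝ) ≤ 1 / T)]
    rw [sub_zero, abs_of_pos hT0] at h1
    calc (1 / T) * |∫ s in (0:ℝ)..T, g (Ψ s p)| ≤ (1 / T) * (B * T) := by gcongr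
      _ = B := by field_simp
  have hGnn : ∀ T : ℝ, 0 < T → ∀ p, 0 ≤ G T p := by
    intro T hT p
    have hint : 0 ≤ ∫ s in (0:ℝ)..T, g (Ψ s p) :=
      intervalIntegral.integral_nonneg (le_of_lt hT) fun u _ => hgnn (Ψ u p)
    exact mul_nonneg (by positivity) hint
  -- iterate identity
  have hΨnat : ∀ (k : ℕ) (p : Ω × Ω), (Ψ 1)^[k] p = Ψ (k : ℝ) p := by
    intro k
    induction k with
    | zero => intro p; simpa using (hΨ0 p).symm
    | succ n ih =>
        intro p
        rw [Function.iterate_succ_apply', ih p, ← hΨadd 1 (n : ℝ)]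
        push_cast
        ring_nf
  have hGone : ∀ q : Ω × Ω, G 1 q = ∫ s in (0:ℝ)..1, g (Ψ s q) := by
    intro q; rw [hG]; simp
  have hGsum : ∀ (n : ℕ) (p : Ω × Ω),
      G (n : ℝ) p = (n : ℝ)⁻¹ * ∑ k ∈ Finset.range n, G 1 (Ψ (k : ℝ) p) := by
    intro n p
    have hadj : ∑ k ∈ Finset.range n, ∫ s in ((k:ℕ):ℝ)..(((k+1:ℕ)):ℝ), g (Ψ s p)
        = ∫ s in (((0:ℕ)):ℝ)..((n:ℕ):ℝ), g (Ψ s p) :=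
      intervalIntegral.sum_integral_adjacent_intervals fun k _ => hintg p _ _
    push_cast at hadj
    have hpiece : ∀ k : ℕ, (∫ s in (k:ℝ)..((k:ℝ)+1), g (Ψ s p)) = G 1 (Ψ (k:ℝ) p) := by
      intro k
      rw [hGone]
      have heq : ∀ s : ℝ, g (Ψ s (Ψ (k:ℝ) p)) = g (Ψ (s + (k:ℝ)) p) := by
        intro s; rw [← hΨadd]
      rw [intervalIntegral.integral_congr fun s _ => heq s,
        intervalIntegral.integral_comp_add_right (fun s => g (Ψ s p)) (k:ℝ)]
      push_cast
      ring_nf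
    rw [hG]
    simp only
    rw [one_div, ← hadj]
    rw [Finset.sum_congr rfl fun k _ => hpiece k]
  -- Lp space setup
  have hG1mem : MemLp (G 1) 2 ν := by
    refine MemLp.of_bound (hASM _ (hGc 1)) B ?_
    filter_upwards [hSae] with p hp
    rw [Real.norm_eq_abs]
    exact hGb 1 le_rfl p hp
  set G1L : Lp ℝ 2 ν := hG1mem.toLp (G 1) with hG1L
  set U : Lp ℝ 2 ν →L[ℝ] Lp ℝ 2 ν :=
    (Lp.compMeasurePreservingₗᵢ ℝ (Ψ 1) (hΨmp 1)).toContinuousLinearMap with hU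
  have hUapp : ∀ f : Lp ℝ 2 ν, ⇑(U f) =ᵐ[ν] f ∘ (Ψ 1) := by
    intro f
    exact Lp.coeFn_compMeasurePreserving f (hΨmp 1)
  have hUnorm : ‖U‖ ≤ 1 := LinearIsometry.norm_toContinuousLinearMap_le _
  obtain ⟨L, hMET⟩ : ∃ L : Lp ℝ 2 ν,
      Tendsto (fun n => birkhoffAverage ℝ (⇑U) _root_.id n G1L) atTop (𝓝 L) :=
    ⟨_, U.tendsto_birkhoffAverage_orthogonalProjection hUnorm G1L⟩
  set Lf : Ω × Ω → ℝ := ⇑L with hLf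
  have hLm : Measurable Lf := (Lp.stronglyMeasurable L).measurable
  -- identification of birkhoff averages with G n
  have hUiter : ∀ (k : ℕ) (f : Lp ℝ 2 ν),
      ⇑((⇑U)^[k] f) =ᵐ[ν] fun p => f (Ψ (k : ℝ) p) := by
    intro k
    induction k with
    | zero =>
        intro f
        simp only [Function.iterate_zero, id_eq, Nat.cast_zero]
        filter_upwards with p
        rw [hΨ0 p]
    | succ n ih =>
        intro f
        rw [Function.iterate_succ_apply']
        refine (hUapp _).trans ?_
        have h2 : (⇑((⇑U)^[n] f)) ∘ (Ψ 1) =ᵐ[ν] (fun p => f (Ψ (n:ℝ) p)) ∘ (Ψ 1) :=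
          (hΨmp 1).quasiMeasurePreserving.ae_eq_comp (ih f)
        refine h2.trans ?_
        filter_upwards with p
        simp only [Function.comp_apply]
        rw [← hΨadd (n:ℝ) 1]
        norm_num
  have hbirk : ∀ n : ℕ,
      ⇑(birkhoffAverage ℝ (⇑U) _root_.id n G1L) =ᵐ[ν] G (n : ℝ) := by
    intro n
    have hsum : ⇑(∑ k ∈ Finset.range n, (⇑U)^[k] G1L)
        =ᵐ[ν] fun p => ∑ k ∈ Finset.range n, ((⇑U)^[k] G1L : Ω × Ω → ℝ) p :=
      aux_coeFn_finset_sum _ _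
    have hterm : ∀ k : ℕ, ⇑((⇑U)^[k] G1L) =ᵐ[ν] fun p => G 1 (Ψ (k:ℝ) p) := by
      intro k
      refine (hUiter k G1L).trans ?_
      have : ⇑G1L =ᵐ[ν] G 1 := hG1mem.coeFn_toLp
      exact (hΨmp (k:ℝ)).quasiMeasurePreserving.ae_eq_comp this
    have hterm' : ∀ᵐ p ∂ν, ∀ k ∈ Finset.range n,
        ((⇑U)^[k] G1L : Ω × Ω → ℝ) p = G 1 (Ψ (k:ℝ) p) := by
      rw [Filter.eventually_all_finset]
      intro k _
      exact hterm k
    have hba : birkhoffAverage ℝ (⇑U) _root_.id n G1L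
        = (n : ℝ)⁻¹ • ∑ k ∈ Finset.range n, (⇑U)^[k] G1L := by
      rw [birkhoffAverage, birkhoffSum]
      congr 1
    rw [hba]
    filter_upwards [Lp.coeFn_smul ((n:ℝ)⁻¹) (∑ k ∈ Finset.range n, (⇑U)^[k] G1L),
      hsum, hterm'] with p h1 h2 h3
    rw [h1]
    simp only [Pi.smul_apply, smul_eq_mul, h2]
    rw [Finset.sum_congr rfl h3, hGsum n p]
  -- discrete L² convergence
  have hdisc : Tendsto (fun n : ℕ => eLpNorm (fun p => G (n:ℝ) p - Lf p) 2 ν) atTop (𝓝 0) := by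
    have hnorm : Tendsto (fun n : ℕ => ‖birkhoffAverage ℝ (⇑U) _root_.id n G1L - L‖)
        atTop (𝓝 0) := by
      rw [← tendsto_iff_norm_sub_tendsto_zero]
      exact hMET
    have heq : ∀ n : ℕ, eLpNorm (fun p => G (n:ℝ) p - Lf p) 2 ν
        = ENNReal.ofReal ‖birkhoffAverage ℝ (⇑U) _root_.id n G1L - L‖ := by
      intro n
      have h1 : (fun p => G (n:ℝ) p - Lf p)
          =ᵐ[ν] ⇑(birkhoffAverage ℝ (⇑U) _root_.id n G1L - L) := by
        filter_upwards [hbirk n, Lp.coeFn_sub (birkhoffAverage ℝ (⇑U) _root_.id n G1L) L]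
          with p h1 h2
        rw [h2]
        simp only [Pi.sub_apply, h1]
        rfl
      rw [eLpNorm_congr_ae h1, Lp.norm_def,
        ENNReal.ofReal_toReal (Lp.eLpNorm_ne_top _)]
    simp only [heq]
    have := ENNReal.tendsto_ofReal (a := 0) hnorm
    simpa using this
  -- the limit is a.e. nonnegative
  have hLnn : ∀ᵐ p ∂ν, 0 ≤ Lf p := by
    have hminle : ∀ a b : ℝ, 0 ≤ b → |min a 0| ≤ |b - a| := by
      intro a b hb
      rcases le_or_gt 0 a with ha | ha
      · rw [min_eq_right ha]
        simp [abs_nonneg]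
      · rw [min_eq_left ha.le, abs_of_neg ha, abs_of_nonneg (by linarith)]
        linarith
    have hmeas : AEStronglyMeasurable (fun p => min (Lf p) 0) ν :=
      (hLm.min measurable_const).aestronglyMeasurable
    have h0 : eLpNorm (fun p => min (Lf p) 0) 2 ν = 0 := by
      have hle : ∀ᶠ n : ℕ in atTop, eLpNorm (fun p => min (Lf p) 0) 2 ν
          ≤ eLpNorm (fun p => G (n:ℝ) p - Lf p) 2 ν := by
        filter_upwards [eventually_ge_atTop 1] with n hn
        apply eLpNorm_mono_ae
        filter_upwards with p
        rw [Real.norm_eq_abs, Real.norm_eq_abs]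
        exact hminle _ _ (hGnn (n:ℝ) (by exact_mod_cast hn) p)
      exact le_antisymm (ge_of_tendsto hdisc hle) zero_le
    have := (eLpNorm_eq_zero_iff hmeas (by norm_num)).1 h0
    filter_upwards [this] with p hp
    have : min (Lf p) 0 = 0 := hp
    rcases le_or_gt 0 (Lf p) with h' | h'
    · exact h'
    · rw [min_eq_left h'.le] at this; linarith
  set l : Ω × Ω → ℝ := fun p => max (Lf p) 0 with hl
  have hlm : Measurable l := hLm.max measurable_const
  have hlnn : ∀ p, 0 ≤ l p := fun p => le_max_right _ _
  have hlLf : l =ᵐ[ν] Lf := by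
    filter_upwards [hLnn] with p hp
    simp [hl, max_eq_left hp]
  have hGlcongr : ∀ T : ℝ, eLpNorm (fun p => G T p - l p) 2 ν
      = eLpNorm (fun p => G T p - Lf p) 2 ν := by
    intro T
    apply eLpNorm_congr_ae
    filter_upwards [hlLf] with p hp
    rw [hp]
  -- convergence along real T
  have hfloor : ∀ T : ℝ, 1 ≤ T → ∀ p ∈ S, |G T p - G ((⌊T⌋₊ : ℕ) : ℝ) p| ≤ 2 * B / T := by
    intro T hT p hp
    have hT0 : 0 < T := lt_of_lt_of_le one_pos hT
    set n : ℕ := ⌊T⌋₊ with hn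
    have hn1 : 1 ≤ n := by
      rw [hn]
      exact Nat.le_floor (by exact_mod_cast hT)
    have hnR1 : (1:ℝ) ≤ (n:ℝ) := by exact_mod_cast hn1
    have hn0 : (0:ℝ) < (n:ℝ) := lt_of_lt_of_le one_pos hnR1
    have hnT : (n:ℝ) ≤ T := Nat.floor_le (le_of_lt hT0)
    have hTn1 : T ≤ (n:ℝ) + 1 := le_of_lt (Nat.lt_floor_add_one T)
    set I1 : ℝ := ∫ s in (0:ℝ)..(n:ℝ), g (Ψ s p) with hI1d
    set I2 : ℝ := ∫ s in (n:ℝ)..T, g (Ψ s p) with hI2d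
    have hsplit : (∫ s in (0:ℝ)..T, g (Ψ s p)) = I1 + I2 :=
      (intervalIntegral.integral_add_adjacent_intervals (hintg p 0 (n:ℝ)) (hintg p (n:ℝ) T)).symm
    have hI1 : |I1| ≤ B * (n:ℝ) := by
      rw [hI1d, ← Real.norm_eq_abs]
      have hbd := intervalIntegral.norm_integral_le_of_norm_le_const
        (C := B) (f := fun s => g (Ψ s p)) (a := (0:ℝ)) (b := (n:ℝ)) ?_
      · simpa [abs_of_nonneg (le_of_lt hn0)] using hbd
      · intro s _
        rw [Real.norm_eq_abs, abs_of_nonneg (hgnn _)]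
        exact hgb p hp s
    have hI2 : |I2| ≤ B * (T - (n:ℝ)) := by
      rw [hI2d, ← Real.norm_eq_abs]
      have hbd := intervalIntegral.norm_integral_le_of_norm_le_const
        (C := B) (f := fun s => g (Ψ s p)) (a := (n:ℝ)) (b := T) ?_
      · simpa [abs_of_nonneg (sub_nonneg.2 hnT)] using hbd
      · intro s _
        rw [Real.norm_eq_abs, abs_of_nonneg (hgnn _)]
        exact hgb p hp s
    have hTne : T ≠ 0 := ne_of_gt hT0
    have hnne : (n:ℝ) ≠ 0 := ne_of_gt hn0
    have hdiff : G T p - G ((n:ℕ):ℝ) p = (1/T) * I2 + (1/T - 1/(n:ℝ)) * I1 := by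
      rw [hG]
      simp only
      rw [hsplit]
      field_simp
      ring
    rw [hdiff]
    have hnonpos : 1/T - 1/(n:ℝ) ≤ 0 := by
      rw [sub_nonpos]
      exact one_div_le_one_div_of_le hn0 hnT
    have e1 : |(1/T) * I2 + (1/T - 1/(n:ℝ)) * I1| ≤ (1/T) * |I2| + (1/(n:ℝ) - 1/T) * |I1| := by
      refine le_trans (abs_add_le _ _) ?_
      rw [abs_mul, abs_mul, abs_of_nonneg (by positivity : (0:ℝ) ≤ 1/T),
        abs_of_nonpos hnonpos, neg_sub]
    have e2 : (1/T) * |I2| + (1/(n:ℝ) - 1/T) * |I1| ≤ 2 * B / T := by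
      have k1 : (1/T) * |I2| ≤ (1/T) * (B * (T - (n:ℝ))) :=
        mul_le_mul_of_nonneg_left hI2 (by positivity)
      have k2 : (1/(n:ℝ) - 1/T) * |I1| ≤ (1/(n:ℝ) - 1/T) * (B * (n:ℝ)) :=
        mul_le_mul_of_nonneg_left hI1
          (sub_nonneg.2 (one_div_le_one_div_of_le hn0 hnT))
      have k3 : (1/T) * (B * (T - (n:ℝ))) + (1/(n:ℝ) - 1/T) * (B * (n:ℝ))
          = 2 * B * (T - (n:ℝ)) / T := by
        field_simp
        ring
      have k4 : 2 * B * (T - (n:ℝ)) / T ≤ 2 * B / T := by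
        refine (div_le_div_iff_of_pos_right hT0).mpr ?_
        nlinarith
      linarith
    linarith
  -- convergence along real times
  have hbound : ∀ T : ℝ, 1 ≤ T → eLpNorm (fun p => G T p - Lf p) 2 ν
      ≤ ENNReal.ofReal (2*B/T) + eLpNorm (fun p => G ((⌊T⌋₊:ℕ):ℝ) p - Lf p) 2 ν := by
    intro T hT
    have hsplitf : (fun p => G T p - Lf p)
        = fun p => (G T p - G ((⌊T⌋₊:ℕ):ℝ) p) + (G ((⌊T⌋₊:ℕ):ℝ) p - Lf p) := by
      funext p; ring
    rw [hsplitf]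
    refine le_trans (eLpNorm_add_le ((hASM _ (hGc T)).sub (hASM _ (hGc _)))
      ((hASM _ (hGc _)).sub (Lp.aestronglyMeasurable L)) (by norm_num)) ?_
    gcongr
    have hb := eLpNorm_le_of_ae_bound (p := (2:ENNReal)) (μ := ν) (C := 2*B/T)
      (f := fun p : Ω × Ω => G T p - G ((⌊T⌋₊:ℕ):ℝ) p) ?_
    · exact le_trans hb (by rw [measure_univ, ENNReal.one_rpow, one_mul])
    · filter_upwards [hSae] with p hp
      rw [Real.norm_eq_abs]
      exact hfloor T hT p hp
  have hGconv : Tendsto (fun T : ℝ => eLpNorm (fun p => G T p - l p) 2 ν) atTop (𝓝 0) := by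
    simp only [hGlcongr]
    have h1 : Tendsto (fun T : ℝ => ENNReal.ofReal (2*B/T)) atTop (𝓝 0) := by
      have h0 : Tendsto (fun T : ℝ => 2*B/T) atTop (𝓝 0) :=
        tendsto_const_nhds.div_atTop tendsto_id
      simpa using ENNReal.tendsto_ofReal h0
    have h2 : Tendsto (fun T : ℝ => eLpNorm (fun p => G ((⌊T⌋₊:ℕ):ℝ) p - Lf p) 2 ν)
        atTop (𝓝 0) := by
      have := hdisc.comp (tendsto_nat_floor_atTop (α := ℝ))
      simpa [Function.comp_def] using this
    have hE : Tendsto (fun T : ℝ => ENNReal.ofReal (2*B/T)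
        + eLpNorm (fun p => G ((⌊T⌋₊:ℕ):ℝ) p - Lf p) 2 ν) atTop (𝓝 0) := by
      simpa using h1.add h2
    refine tendsto_of_tendsto_of_tendsto_of_le_of_le' tendsto_const_nhds hE
      (Eventually.of_forall fun T => zero_le) ?_
    filter_upwards [eventually_ge_atTop (1:ℝ)] with T hT
    exact hbound T hT
  -- invariance of the limit
  have hshiftb : ∀ t T : ℝ, 1 ≤ T → ∀ p ∈ S, |G T (Ψ t p) - G T p| ≤ 2*B*|t|/T := by
    intro t T hT p hp
    have hT0 : 0 < T := lt_of_lt_of_le one_pos hT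
    have hcomp : (∫ s in (0:ℝ)..T, g (Ψ s (Ψ t p))) = ∫ s in t..(T+t), g (Ψ s p) := by
      have heq : ∀ s : ℝ, g (Ψ s (Ψ t p)) = g (Ψ (s+t) p) := fun s => by rw [← hΨadd]
      rw [intervalIntegral.integral_congr fun s _ => heq s,
        intervalIntegral.integral_comp_add_right (fun s => g (Ψ s p)) t, zero_add]
    have hsplit1 : (∫ s in t..(T+t), g (Ψ s p))
        = (∫ s in t..T, g (Ψ s p)) + ∫ s in T..(T+t), g (Ψ s p) :=
      (intervalIntegral.integral_add_adjacent_intervals (hintg p t T) (hintg p T (T+t))).symm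
    have hsplit2 : (∫ s in (0:ℝ)..T, g (Ψ s p))
        = (∫ s in (0:ℝ)..t, g (Ψ s p)) + ∫ s in t..T, g (Ψ s p) :=
      (intervalIntegral.integral_add_adjacent_intervals (hintg p 0 t) (hintg p t T)).symm
    have hb1 : |∫ s in T..(T+t), g (Ψ s p)| ≤ B * |t| := by
      rw [← Real.norm_eq_abs]
      have hbd := intervalIntegral.norm_integral_le_of_norm_le_const
        (C := B) (f := fun s => g (Ψ s p)) (a := T) (b := T+t) ?_
      · simpa using hbd
      · intro s _
        rw [Real.norm_eq_abs, abs_of_nonneg (hgnn _)]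
        exact hgb p hp s
    have hb2 : |∫ s in (0:ℝ)..t, g (Ψ s p)| ≤ B * |t| := by
      rw [← Real.norm_eq_abs]
      have hbd := intervalIntegral.norm_integral_le_of_norm_le_const
        (C := B) (f := fun s => g (Ψ s p)) (a := (0:ℝ)) (b := t) ?_
      · simpa using hbd
      · intro s _
        rw [Real.norm_eq_abs, abs_of_nonneg (hgnn _)]
        exact hgb p hp s
    have hGdiff : G T (Ψ t p) - G T p
        = (1/T) * ((∫ s in T..(T+t), g (Ψ s p)) - ∫ s in (0:ℝ)..t, g (Ψ s p)) := by
      rw [hG]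
      simp only
      rw [hcomp, hsplit1, hsplit2]
      ring
    rw [hGdiff, abs_mul, abs_of_nonneg (by positivity : (0:ℝ) ≤ 1/T)]
    have habs : |(∫ s in T..(T+t), g (Ψ s p)) - ∫ s in (0:ℝ)..t, g (Ψ s p)|
        ≤ B * |t| + B * |t| := by
      refine le_trans (abs_sub _ _) (add_le_add hb1 hb2)
    calc (1/T) * |(∫ s in T..(T+t), g (Ψ s p)) - ∫ s in (0:ℝ)..t, g (Ψ s p)|
        ≤ (1/T) * (B * |t| + B * |t|) := mul_le_mul_of_nonneg_left habs (by positivity)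
      _ = 2*B*|t|/T := by ring
  have hinv : ∀ t : ℝ, (fun p => l (Ψ t p)) =ᵐ[ν] l := by
    intro t
    have hmeas : AEStronglyMeasurable (fun p => l (Ψ t p) - l p) ν :=
      ((hlm.comp (hΨmp t).measurable).sub hlm).aestronglyMeasurable
    have hub : ∀ T : ℝ, 1 ≤ T → eLpNorm (fun p => l (Ψ t p) - l p) 2 ν
        ≤ eLpNorm (fun p => G T p - l p) 2 ν
          + (ENNReal.ofReal (2*B*|t|/T) + eLpNorm (fun p => G T p - l p) 2 ν) := by
      intro T hT
      have hd1 : (fun p => l (Ψ t p) - l p)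
          = fun p => (l (Ψ t p) - G T (Ψ t p)) + ((G T (Ψ t p) - G T p) + (G T p - l p)) := by
        funext p; ring
      rw [hd1]
      have mGt : AEStronglyMeasurable (fun p => G T (Ψ t p)) ν := by
        have := (hASM _ (hGc T)).comp_measurePreserving (hΨmp t)
        exact this
      have m1 : AEStronglyMeasurable (fun p => l (Ψ t p) - G T (Ψ t p)) ν :=
        ((hlm.comp (hΨmp t).measurable).aestronglyMeasurable).sub mGt
      have m2 : AEStronglyMeasurable (fun p => G T (Ψ t p) - G T p) ν :=
        mGt.sub (hASM _ (hGc T))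
      have m3 : AEStronglyMeasurable (fun p => G T p - l p) ν :=
        (hASM _ (hGc T)).sub hlm.aestronglyMeasurable
      refine le_trans (eLpNorm_add_le m1 (m2.add m3) (by norm_num)) ?_
      gcongr
      · have hcompf : (fun p => l (Ψ t p) - G T (Ψ t p)) = (l - G T) ∘ (Ψ t) := rfl
        rw [hcompf, eLpNorm_comp_measurePreserving
          (hlm.aestronglyMeasurable.sub (hASM _ (hGc T))) (hΨmp t), eLpNorm_sub_comm]
        exact le_of_eq rfl
      · refine le_trans (eLpNorm_add_le m2 m3 (by norm_num)) ?_
        gcongr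
        have hb := eLpNorm_le_of_ae_bound (p := (2:ENNReal)) (μ := ν) (C := 2*B*|t|/T)
          (f := fun p : Ω × Ω => G T (Ψ t p) - G T p) ?_
        · exact le_trans hb (by rw [measure_univ, ENNReal.one_rpow, one_mul])
        · filter_upwards [hSae] with p hp
          rw [Real.norm_eq_abs]
          exact hshiftb t T hT p hp
    have hzero : eLpNorm (fun p => l (Ψ t p) - l p) 2 ν = 0 := by
      have h1 : Tendsto (fun T : ℝ => ENNReal.ofReal (2*B*|t|/T)) atTop (𝓝 0) := by
        have h0 : Tendsto (fun T : ℝ => 2*B*|t|/T) atTop (𝓝 0) :=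
          tendsto_const_nhds.div_atTop tendsto_id
        simpa using ENNReal.tendsto_ofReal h0
      have hE : Tendsto (fun T : ℝ => eLpNorm (fun p => G T p - l p) 2 ν
          + (ENNReal.ofReal (2*B*|t|/T) + eLpNorm (fun p => G T p - l p) 2 ν))
          atTop (𝓝 0) := by
        simpa using hGconv.add (h1.add hGconv)
      refine le_antisymm ?_ zero_le
      refine ge_of_tendsto hE ?_
      filter_upwards [eventually_ge_atTop (1:ℝ)] with T hT using hub T hT
    have hae := (eLpNorm_eq_zero_iff hmeas (by norm_num)).1 hzero
    filter_upwards [hae] with p hp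
    have hp' : l (Ψ t p) - l p = 0 := hp
    linarith
  -- conclusion
  refine ⟨fun p => Real.sqrt (l p), fun p => h (l p), ?_, ?_, ?_, ?_⟩
  · show Tendsto (fun T : ℝ =>
        eLpNorm (fun p : Ω × Ω => dT T p.1 p.2 - Real.sqrt (l p)) 2 ν) atTop (𝓝 0)
    have hrw : ∀ T : ℝ, (fun p : Ω × Ω => dT T p.1 p.2 - Real.sqrt (l p))
        = fun p : Ω × Ω => Real.sqrt (G T p) - Real.sqrt (l p) := by
      intro T; funext p; rw [hdT, hdT2G]
    have hle : ∀ T : ℝ, 1 ≤ T →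
        eLpNorm (fun p : Ω × Ω => Real.sqrt (G T p) - Real.sqrt (l p)) 2 ν
          ≤ (eLpNorm (fun p => G T p - l p) 2 ν) ^ (1/2:ℝ) := by
      intro T hT
      refine aux_eLpNorm_sqrt_le ((hASM _ (hGc T)).sub hlm.aestronglyMeasurable) ?_
      filter_upwards with p
      have h1 := aux_abs_sqrt_sub_sqrt_le (hGnn T (lt_of_lt_of_le one_pos hT) p) (hlnn p)
      calc |Real.sqrt (G T p) - Real.sqrt (l p)| ^ 2
          ≤ Real.sqrt |G T p - l p| ^ 2 := pow_le_pow_left₀ (abs_nonneg _) h1 2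
        _ = |G T p - l p| := Real.sq_sqrt (abs_nonneg _)
    refine tendsto_of_tendsto_of_tendsto_of_le_of_le' tendsto_const_nhds
      (aux_tendsto_rpow_half_zero hGconv) (Eventually.of_forall fun T => zero_le) ?_
    filter_upwards [eventually_ge_atTop (1:ℝ)] with T hT
    rw [hrw T]
    exact hle T hT
  · intro t
    filter_upwards [hinv t] with p hp
    exact congrArg Real.sqrt hp
  · show Tendsto (fun T : ℝ =>
        eLpNorm (fun p : Ω × Ω => kT T p.1 p.2 - h (l p)) 2 ν) atTop (𝓝 0)
    obtain ⟨C, hC⟩ := hh'bdd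
    have hC0 : 0 ≤ C := le_trans (abs_nonneg _) (hC 0 le_rfl)
    have hlip : ∀ a b : ℝ, 0 ≤ a → 0 ≤ b → |h a - h b| ≤ C * |a - b| := by
      intro a b ha hb
      have hmvt := Convex.norm_image_sub_le_of_norm_deriv_le (𝕜 := ℝ) (f := h)
        (s := Set.Ici (0:ℝ)) (fun x _ => (hhC1.differentiable one_ne_zero).differentiableAt)
        (fun x hx => by rw [Real.norm_eq_abs]; exact hC x hx) (convex_Ici 0) hb ha
      simpa [Real.norm_eq_abs] using hmvt
    have hrw : ∀ T : ℝ, (fun p : Ω × Ω => kT T p.1 p.2 - h (l p))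
        = fun p : Ω × Ω => h (G T p) - h (l p) := by
      intro T; funext p; rw [hkT, hdT2G]
    have hle : ∀ T : ℝ, 1 ≤ T →
        eLpNorm (fun p : Ω × Ω => h (G T p) - h (l p)) 2 ν
          ≤ ENNReal.ofReal C * eLpNorm (fun p => G T p - l p) 2 ν := by
      intro T hT
      have hmono : eLpNorm (fun p : Ω × Ω => h (G T p) - h (l p)) 2 ν
          ≤ eLpNorm (fun p : Ω × Ω => C * (G T p - l p)) 2 ν := by
        apply eLpNorm_mono_ae
        filter_upwards with p
        rw [Real.norm_eq_abs, Real.norm_eq_abs, abs_mul, abs_of_nonneg hC0]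
        exact hlip _ _ (hGnn T (lt_of_lt_of_le one_pos hT) p) (hlnn p)
      refine le_trans hmono ?_
      have hsmul : (fun p : Ω × Ω => C * (G T p - l p)) = C • (fun p => G T p - l p) := rfl
      rw [hsmul, eLpNorm_const_smul, Real.enorm_eq_ofReal_abs, abs_of_nonneg hC0]
    have hmul : Tendsto (fun T : ℝ => ENNReal.ofReal C * eLpNorm (fun p => G T p - l p) 2 ν)
        atTop (𝓝 0) := by
      have := ENNReal.Tendsto.const_mul (a := ENNReal.ofReal C) hGconv (Or.inr ENNReal.ofReal_ne_top)
      simpa using this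
    refine tendsto_of_tendsto_of_tendsto_of_le_of_le' tendsto_const_nhds hmul
      (Eventually.of_forall fun T => zero_le) ?_
    filter_upwards [eventually_ge_atTop (1:ℝ)] with T hT
    rw [hrw T]
    exact hle T hT
  · intro t
    filter_upwards [hinv t] with p hp
    exact congrArg h hp
end

section
/- For every t ≥ 0 and T > 0, the commutator of the Koopman operator and the delay-coordinate kernel integral operator satisfies ‖[U^t, K_T]‖ = ‖U^t K_T − K_T U^t‖ ≤ 2 ‖h‖_{C¹(ℝ₊)} ‖d‖²_{C(X×X)} t / T, where ‖·‖ is the L²(μ) operator norm. -/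
open MeasureTheory Filter Topology Complex

/-- For every `t ≥ 0` and `T > 0`, the commutator of the Koopman operator and
the delay-coordinate kernel integral operator satisfies
`‖[U^t, K_T]‖ = ‖U^t K_T − K_T U^t‖ ≤ 2 ‖h‖_{C¹(ℝ₊)} ‖d‖²_{C(X×X)} t / T`,
where `‖·‖` is the `L²(μ)` operator norm. -/
theorem koopman_kernel_commutator_bound
    {Ω : Type*} [MeasurableSpace Ω] [MetricSpace Ω] [BorelSpace Ω]
    {Y : Type*} [NormedAddCommGroup Y]
    (μ : Measure Ω) [IsProbabilityMeasure μ]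
    (Φ : ℝ → Ω → Ω)
    (hΦcont : Continuous fun p : ℝ × Ω => Φ p.1 p.2)
    (hΦ0 : Φ 0 = id)
    (hΦadd : ∀ s t : ℝ, Φ (s + t) = Φ s ∘ Φ t)
    (hΦmp : ∀ t : ℝ, MeasurePreserving (Φ t) μ μ)
    (hErg : ∀ s : Set Ω, MeasurableSet s → (∀ t : ℝ, Φ t ⁻¹' s = s) → μ s = 0 ∨ μ s = 1)
    (X : Set Ω) (hXcomp : IsCompact X) (hXsupp : μ Xᶜ = 0)
    (hXinv : ∀ t : ℝ, Set.MapsTo (Φ t) X X)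
    (F : Ω → Y) (hF : Continuous F)
    (d : Ω → Ω → ℝ) (hd : ∀ x x', d x x' = ‖F x - F x'‖)
    (T : ℝ) (hT : 0 < T)
    (dT2 : Ω → Ω → ℝ)
    (hdT2 : ∀ x x', dT2 x x' = (1 / T) * ∫ t in (0:ℝ)..T, (d (Φ t x) (Φ t x')) ^ 2)
    (h : ℝ → ℝ) (hhpos : ∀ u : ℝ, 0 ≤ u → 0 < h u)
    (hhC1 : ContDiff ℝ 1 h)
    (hhbdd : ∃ C, ∀ u : ℝ, 0 ≤ u → |h u| ≤ C)
    (hh'bdd : ∃ C, ∀ u : ℝ, 0 ≤ u → |deriv h u| ≤ C)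
    (kT : Ω → Ω → ℝ) (hkT : ∀ x x', kT x x' = h (dT2 x x'))
    (K : Lp ℂ 2 μ →L[ℂ] Lp ℂ 2 μ)
    (hK : ∀ f : Lp ℂ 2 μ, ∀ᵐ x ∂μ, K f x = ∫ y, (kT x y : ℂ) * f y ∂μ)
    (U : ℝ → Lp ℂ 2 μ →L[ℂ] Lp ℂ 2 μ)
    (hU : ∀ (t : ℝ) (f : Lp ℂ 2 μ), ∀ᵐ x ∂μ, U t f x = f (Φ t x))
    -- the C¹ norm of h and the sup norm of d² on X×X
    (hC1norm d2supX : ℝ)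
    (hhC1norm : hC1norm =
      (⨆ u : {u : ℝ // 0 ≤ u}, |h u|) + ⨆ u : {u : ℝ // 0 ≤ u}, |deriv h u|)
    (hd2supX : d2supX = ⨆ x : X, ⨆ y : X, (d x y) ^ 2) :
    ∀ t : ℝ, 0 ≤ t →
      ‖(U t).comp K - K.comp (U t)‖ ≤ 2 * hC1norm * d2supX * t / T := by
  intro t ht
  obtain ⟨Ch, hCh⟩ := hhbdd
  obtain ⟨Ch', hCh'⟩ := hh'bdd
  set A := (⨆ u : {u : ℝ // 0 ≤ u}, |h u|) with hA
  set B := (⨆ u : {u : ℝ // 0 ≤ u}, |deriv h u|) with hB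
  have hA0 : 0 ≤ A := Real.iSup_nonneg fun u => abs_nonneg _
  have hB0 : 0 ≤ B := Real.iSup_nonneg fun u => abs_nonneg _
  have hAle : ∀ u : ℝ, 0 ≤ u → |h u| ≤ A := by
    intro u hu
    exact le_ciSup (f := fun u : {u : ℝ // 0 ≤ u} => |h ↑u|)
      ⟨Ch, by rintro _ ⟨v, rfl⟩; exact hCh v v.2⟩ (⟨u, hu⟩ : {u : ℝ // 0 ≤ u})
  have hBle : ∀ u : ℝ, 0 ≤ u → |deriv h u| ≤ B := by
    intro u hu
    exact le_ciSup (f := fun u : {u : ℝ // 0 ≤ u} => |deriv h ↑u|)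
      ⟨Ch', by rintro _ ⟨v, rfl⟩; exact hCh' v v.2⟩ (⟨u, hu⟩ : {u : ℝ // 0 ≤ u})
  have hCnB : B ≤ hC1norm := by rw [hhC1norm]; linarith
  have hCn0 : 0 ≤ hC1norm := by rw [hhC1norm]; linarith
  -- X is nonempty
  have hXne : X.Nonempty := by
    rw [Set.nonempty_iff_ne_empty]
    rintro rfl
    simp [measure_univ] at hXsupp
  -- bound on F over X
  obtain ⟨M, hM⟩ := hXcomp.exists_bound_of_continuousOn hF.continuousOn
  have hdnn : ∀ a b : Ω, 0 ≤ d a b := fun a b => by rw [hd]; exact norm_nonneg _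
  have hsq : ∀ a ∈ X, ∀ b ∈ X, d a b ^ 2 ≤ (2 * M) ^ 2 := by
    intro a ha b hb
    have h1 : d a b ≤ 2 * M := by
      rw [hd]
      have := hM a ha; have := hM b hb
      calc ‖F a - F b‖ ≤ ‖F a‖ + ‖F b‖ := norm_sub_le _ _
        _ ≤ 2 * M := by linarith
    nlinarith [hdnn a b]
  have hd2le : ∀ a ∈ X, ∀ b ∈ X, d a b ^ 2 ≤ d2supX := by
    intro a ha b hb
    rw [hd2supX]
    have h1 : d a b ^ 2 ≤ ⨆ y : X, d a ↑y ^ 2 :=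
      le_ciSup (f := fun y : X => d a ↑y ^ 2)
        ⟨(2 * M) ^ 2, by rintro _ ⟨y, rfl⟩; exact hsq a ha y y.2⟩ (⟨b, hb⟩ : X)
    refine h1.trans (le_ciSup (f := fun x : X => ⨆ y : X, d ↑x ↑y ^ 2) ?_ (⟨a, ha⟩ : X))
    exact ⟨(2 * M) ^ 2, by
      rintro _ ⟨x, rfl⟩
      exact Real.iSup_le (fun y => hsq x x.2 y y.2) (sq_nonneg _)⟩
  have hd2s0 : 0 ≤ d2supX :=
    le_trans (sq_nonneg _) (hd2le _ hXne.choose_spec _ hXne.choose_spec)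
  -- flow basics
  have hΦc : ∀ s : ℝ, Continuous (Φ s) := fun s =>
    hΦcont.comp (continuous_const.prodMk continuous_id)
  have hΦinv : ∀ s : ℝ, ∀ z : Ω, Φ s (Φ (-s) z) = z := by
    intro s z
    have := congrFun (hΦadd s (-s)).symm z
    simpa [hΦ0] using this
  -- dT2 nonneg
  have hdT2nn : ∀ x y : Ω, 0 ≤ dT2 x y := by
    intro x y
    rw [hdT2]
    have : 0 ≤ ∫ s in (0:ℝ)..T, d (Φ s x) (Φ s y) ^ 2 :=
      intervalIntegral.integral_nonneg hT.le (fun s _ => sq_nonneg _)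
    positivity
  -- continuity of d and dT2
  have hdcont : Continuous fun p : Ω × Ω => d p.1 p.2 := by
    have : (fun p : Ω × Ω => d p.1 p.2) = fun p : Ω × Ω => ‖F p.1 - F p.2‖ :=
      funext fun p => hd _ _
    rw [this]
    exact ((hF.comp continuous_fst).sub (hF.comp continuous_snd)).norm
  have hdT2cont : Continuous fun p : Ω × Ω => dT2 p.1 p.2 := by
    have heq : (fun p : Ω × Ω => dT2 p.1 p.2)
        = fun p : Ω × Ω => (1 / T) * ∫ s in (0:ℝ)..T, d (Φ s p.1) (Φ s p.2) ^ 2 :=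
      funext fun p => hdT2 _ _
    rw [heq]
    refine continuous_const.mul ?_
    refine intervalIntegral.continuous_parametric_intervalIntegral_of_continuous'
      (f := fun (p : Ω × Ω) (s : ℝ) => d (Φ s p.1) (Φ s p.2) ^ 2) ?_ 0 T
    have h1 : Continuous fun q : (Ω × Ω) × ℝ => Φ q.2 q.1.1 :=
      hΦcont.comp (continuous_snd.prodMk continuous_fst.fst)
    have h2 : Continuous fun q : (Ω × Ω) × ℝ => Φ q.2 q.1.2 :=
      hΦcont.comp (continuous_snd.prodMk continuous_fst.snd)
    exact (hdcont.comp (h1.prodMk h2)).pow 2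
  have hkTcont : Continuous fun p : Ω × Ω => kT p.1 p.2 := by
    have : (fun p : Ω × Ω => kT p.1 p.2) = fun p : Ω × Ω => h (dT2 p.1 p.2) :=
      funext fun p => hkT _ _
    rw [this]
    exact hhC1.continuous.comp hdT2cont
  have hkTbdd : ∀ x y : Ω, |kT x y| ≤ A := fun x y => by
    rw [hkT]; exact hAle _ (hdT2nn x y)
  -- the kernel difference estimate
  have hker : ∀ x ∈ X, ∀ y ∈ X,
      |kT (Φ t x) y - kT x (Φ (-t) y)| ≤ hC1norm * (2 * d2supX * t / T) := by
    intro x hx y hy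
    set y' := Φ (-t) y with hy'def
    have hy'X : y' ∈ X := hXinv (-t) hy
    have hyy : Φ t y' = y := hΦinv t y
    set g : ℝ → ℝ := fun s => d (Φ s x) (Φ s y') ^ 2 with hgdef
    have hgcont : Continuous g := by
      have h1 : Continuous fun s : ℝ => Φ s x :=
        hΦcont.comp (continuous_id.prodMk continuous_const)
      have h2 : Continuous fun s : ℝ => Φ s y' :=
        hΦcont.comp (continuous_id.prodMk continuous_const)
      exact (hdcont.comp (h1.prodMk h2)).pow 2
    have hgle : ∀ s : ℝ, g s ≤ d2supX := fun s =>
      hd2le _ (hXinv s hx) _ (hXinv s hy'X)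
    have hgnn : ∀ s : ℝ, 0 ≤ g s := fun s => sq_nonneg _
    -- time shift
    have hshift : dT2 (Φ t x) y = (1 / T) * ∫ s in t..(T + t), g s := by
      rw [← hyy, hdT2]
      congr 1
      calc (∫ s in (0:ℝ)..T, d (Φ s (Φ t x)) (Φ s (Φ t y')) ^ 2)
          = ∫ s in (0:ℝ)..T, g (s + t) := by
            refine intervalIntegral.integral_congr fun s _ => ?_
            simp only [hgdef]
            rw [← Function.comp_apply (f := Φ s) (g := Φ t) (x := x),
              ← Function.comp_apply (f := Φ s) (g := Φ t) (x := y'), ← hΦadd]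
        _ = ∫ s in (0 + t)..(T + t), g s := intervalIntegral.integral_comp_add_right g t
        _ = ∫ s in t..(T + t), g s := by rw [zero_add]
    have hii : ∀ a b : ℝ, IntervalIntegrable g MeasureTheory.volume a b := fun a b =>
      hgcont.intervalIntegrable a b
    have hsplit : (∫ s in t..(T + t), g s) - ∫ s in (0:ℝ)..T, g s
        = (∫ s in T..(T + t), g s) - ∫ s in (0:ℝ)..t, g s := by
      have h1 := intervalIntegral.integral_add_adjacent_intervals (hii 0 t) (hii t (T + t))
      have h2 := intervalIntegral.integral_add_adjacent_intervals (hii 0 T) (hii T (T + t))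
      linarith
    have hb1 : |∫ s in T..(T + t), g s| ≤ d2supX * t := by
      have := intervalIntegral.norm_integral_le_of_norm_le_const
        (a := T) (b := T + t) (C := d2supX) (f := g)
        (fun s _ => by rw [Real.norm_eq_abs, _root_.abs_of_nonneg (hgnn s)]; exact hgle s)
      simpa [_root_.abs_of_nonneg ht] using this
    have hb2 : |∫ s in (0:ℝ)..t, g s| ≤ d2supX * t := by
      have := intervalIntegral.norm_integral_le_of_norm_le_const
        (a := 0) (b := t) (C := d2supX) (f := g)
        (fun s _ => by rw [Real.norm_eq_abs, _root_.abs_of_nonneg (hgnn s)]; exact hgle s)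
      simpa [_root_.abs_of_nonneg ht] using this
    have hdT2diff : |dT2 (Φ t x) y - dT2 x y'| ≤ 2 * d2supX * t / T := by
      rw [hshift, hdT2]
      have : (1 / T) * (∫ s in t..(T + t), g s) - (1 / T) * ∫ s in (0:ℝ)..T, d (Φ s x) (Φ s y') ^ 2
          = (1 / T) * ((∫ s in T..(T + t), g s) - ∫ s in (0:ℝ)..t, g s) := by
        have : (∫ s in (0:ℝ)..T, d (Φ s x) (Φ s y') ^ 2) = ∫ s in (0:ℝ)..T, g s := rfl
        rw [this]
        rw [← mul_sub, hsplit]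
      rw [this, abs_mul, _root_.abs_of_nonneg (by positivity : (0:ℝ) ≤ 1 / T)]
      have habs : |(∫ s in T..(T + t), g s) - ∫ s in (0:ℝ)..t, g s| ≤ 2 * (d2supX * t) := by
        calc |(∫ s in T..(T + t), g s) - ∫ s in (0:ℝ)..t, g s|
            ≤ |∫ s in T..(T + t), g s| + |∫ s in (0:ℝ)..t, g s| := abs_sub _ _
          _ ≤ 2 * (d2supX * t) := by linarith
      calc (1 / T) * |(∫ s in T..(T + t), g s) - ∫ s in (0:ℝ)..t, g s|
          ≤ (1 / T) * (2 * (d2supX * t)) := by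
            exact mul_le_mul_of_nonneg_left habs (by positivity)
        _ = 2 * d2supX * t / T := by ring
    -- mean value theorem
    have hmvt : |kT (Φ t x) y - kT x y'| ≤ B * |dT2 (Φ t x) y - dT2 x y'| := by
      rw [hkT, hkT]
      have := Convex.norm_image_sub_le_of_norm_deriv_le (f := h) (s := Set.Ici (0:ℝ))
        (C := B) (fun u _ => (hhC1.differentiable one_ne_zero).differentiableAt)
        (fun u hu => by rw [Real.norm_eq_abs]; exact hBle u hu)
        (convex_Ici 0) (Set.mem_Ici.2 (hdT2nn x y')) (Set.mem_Ici.2 (hdT2nn (Φ t x) y))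
      simpa [Real.norm_eq_abs] using this
    calc |kT (Φ t x) y - kT x y'|
        ≤ B * |dT2 (Φ t x) y - dT2 x y'| := hmvt
      _ ≤ hC1norm * (2 * d2supX * t / T) :=
          mul_le_mul hCnB hdT2diff (abs_nonneg _) hCn0
  -- operator norm bound
  have hC0 : 0 ≤ 2 * hC1norm * d2supX * t / T := by positivity
  refine ContinuousLinearMap.opNorm_le_bound _ hC0 (fun f => ?_)
  -- integrability of f
  have hfmeas := Lp.aestronglyMeasurable f
  have hfi : Integrable (f : Ω → ℂ) μ :=
    MemLp.integrable (by norm_num) (Lp.memLp f)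
  -- measurability of kernels
  have hk1meas : ∀ x : Ω, AEStronglyMeasurable (fun y => (kT x y : ℂ)) μ := by
    intro x
    exact (Complex.continuous_ofReal.comp
      (hkTcont.comp (continuous_const.prodMk continuous_id))).aestronglyMeasurable
  have hk2meas : ∀ x : Ω, AEStronglyMeasurable (fun y => (kT x (Φ (-t) y) : ℂ)) μ := by
    intro x
    exact (Complex.continuous_ofReal.comp
      (hkTcont.comp (continuous_const.prodMk (hΦc (-t))))).aestronglyMeasurable
  -- pointwise identity for K (U t f)
  have e5 : ∀ x : Ω, (∫ y, (kT x y : ℂ) * (U t f) y ∂μ)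
      = ∫ y, (kT x (Φ (-t) y) : ℂ) * f y ∂μ := by
    intro x
    have step1 : (∫ y, (kT x y : ℂ) * (U t f) y ∂μ)
        = ∫ y, (kT x y : ℂ) * f (Φ t y) ∂μ := by
      refine integral_congr_ae ?_
      filter_upwards [hU t f] with y hy
      rw [hy]
    have hmeas : AEStronglyMeasurable (fun y => (kT x y : ℂ) * f (Φ t y)) μ := by
      refine (hk1meas x).mul ?_
      exact hfmeas.comp_quasiMeasurePreserving (hΦmp t).quasiMeasurePreserving
    have chg : ∀ g : Ω → ℂ, AEStronglyMeasurable g μ →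
        (∫ y, g y ∂μ) = ∫ y, g (Φ (-t) y) ∂μ := by
      intro g hg
      conv_lhs => rw [← (hΦmp (-t)).map_eq]
      exact integral_map (hΦc (-t)).aemeasurable (by rwa [(hΦmp (-t)).map_eq])
    have step2 : (∫ y, (kT x y : ℂ) * f (Φ t y) ∂μ)
        = ∫ y, (kT x (Φ (-t) y) : ℂ) * f (Φ t (Φ (-t) y)) ∂μ :=
      chg (fun y => (kT x y : ℂ) * f (Φ t y)) hmeas
    rw [step1, step2]
    refine integral_congr_ae (Eventually.of_forall fun y => ?_)
    simp only [hΦinv t y]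
  -- integrability of kernel * f
  have hint1 : ∀ x : Ω, Integrable (fun y => (kT (Φ t x) y : ℂ) * f y) μ := fun x =>
    hfi.bdd_mul (c := A) (hk1meas (Φ t x))
      (Eventually.of_forall fun y => by rw [Complex.norm_real, Real.norm_eq_abs]; exact hkTbdd _ _)
  have hint2 : ∀ x : Ω, Integrable (fun y => (kT x (Φ (-t) y) : ℂ) * f y) μ := fun x =>
    hfi.bdd_mul (c := A) (hk2meas x)
      (Eventually.of_forall fun y => by rw [Complex.norm_real, Real.norm_eq_abs]; exact hkTbdd _ _)
  -- a.e. x in X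
  have haeX : ∀ᵐ x ∂μ, x ∈ X := by
    rw [← compl_compl X] at hXsupp ⊢
    exact (ae_iff (p := fun x => x ∈ Xᶜᶜ)).2 (by simp only [compl_compl] at hXsupp ⊢; exact hXsupp)
  -- main pointwise bound
  have hDf : ∀ᵐ x ∂μ, ‖(((U t).comp K - K.comp (U t)) f : Lp ℂ 2 μ) x‖
      ≤ (2 * hC1norm * d2supX * t / T) * ∫ y, ‖f y‖ ∂μ := by
    have e1 : (((U t).comp K - K.comp (U t)) f : Ω → ℂ)
        =ᵐ[μ] fun x => (U t (K f)) x - (K (U t f)) x := by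
      have : ((U t).comp K - K.comp (U t)) f = U t (K f) - K (U t f) := by
        simp [ContinuousLinearMap.sub_apply, ContinuousLinearMap.comp_apply]
      rw [this]
      exact Lp.coeFn_sub _ _
    have e2 := hU t (K f)
    have e3 : ∀ᵐ x ∂μ, (K f : Ω → ℂ) (Φ t x) = ∫ y, (kT (Φ t x) y : ℂ) * f y ∂μ :=
      (hΦmp t).quasiMeasurePreserving.ae (hK f)
    have e4 := hK (U t f)
    filter_upwards [e1, e2, e3, e4, haeX] with x h1 h2 h3 h4 hxX
    rw [h1, h2, h3, h4, e5 x]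
    rw [← integral_sub (hint1 x) (hint2 x)]
    have : (fun y => (kT (Φ t x) y : ℂ) * f y - (kT x (Φ (-t) y) : ℂ) * f y)
        = fun y => ((kT (Φ t x) y : ℂ) - (kT x (Φ (-t) y) : ℂ)) * f y := by
      funext y; ring
    rw [this]
    calc ‖∫ y, ((kT (Φ t x) y : ℂ) - (kT x (Φ (-t) y) : ℂ)) * f y ∂μ‖
        ≤ ∫ y, ‖((kT (Φ t x) y : ℂ) - (kT x (Φ (-t) y) : ℂ)) * f y‖ ∂μ :=
          norm_integral_le_integral_norm _
      _ ≤ ∫ y, (2 * hC1norm * d2supX * t / T) * ‖f y‖ ∂μ := by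
          refine integral_mono_ae ?_ (hfi.norm.const_mul _) ?_
          · exact (((hint1 x).sub (hint2 x)).congr
              (Eventually.of_forall fun y => (sub_mul _ _ ((f : Ω → ℂ) y)).symm)).norm
          · filter_upwards [haeX] with y hyX
            rw [norm_mul, ← Complex.ofReal_sub, Complex.norm_real, Real.norm_eq_abs]
            refine mul_le_mul_of_nonneg_right ?_ (norm_nonneg _)
            calc |kT (Φ t x) y - kT x (Φ (-t) y)|
                ≤ hC1norm * (2 * d2supX * t / T) := hker x hxX y hyX
              _ = 2 * hC1norm * d2supX * t / T := by ring
      _ = (2 * hC1norm * d2supX * t / T) * ∫ y, ‖f y‖ ∂μ :=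
          integral_const_mul _ _
  -- conclude via Lp norm bound
  have hIf : ∫ y, ‖f y‖ ∂μ ≤ ‖f‖ := by
    rw [Lp.norm_def]
    have h1 : eLpNorm (f : Ω → ℂ) 1 μ ≤ eLpNorm (f : Ω → ℂ) 2 μ :=
      eLpNorm_le_eLpNorm_of_exponent_le (by norm_num) hfmeas
    have h2 : ∫ y, ‖f y‖ ∂μ = (eLpNorm (f : Ω → ℂ) 1 μ).toReal := by
      rw [eLpNorm_one_eq_lintegral_enorm]
      exact integral_norm_eq_lintegral_enorm hfmeas
    rw [h2]
    exact ENNReal.toReal_mono (Lp.eLpNorm_ne_top f) h1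
  have hInn : 0 ≤ ∫ y, ‖f y‖ ∂μ := integral_nonneg fun y => norm_nonneg _
  have := Lp.norm_le_of_ae_bound (by positivity) hDf
  have hμ1 : ((measureUnivNNReal μ : ℝ)) = 1 := by
    simp [measureUnivNNReal, measure_univ]
  rw [hμ1, Real.one_rpow, one_mul] at this
  calc ‖((U t).comp K - K.comp (U t)) f‖
      ≤ (2 * hC1norm * d2supX * t / T) * ∫ y, ‖f y‖ ∂μ := this
    _ ≤ (2 * hC1norm * d2supX * t / T) * ‖f‖ :=
        mul_le_mul_of_nonneg_left hIf hC0
end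

section
/- For all x, x' ∈ X, t ≥ 0 and T > 0, the time-shifted finite-time average satisfies |d_T²(Φ^t(x), Φ^t(x')) − d_T²(x, x')| ≤ 2 ‖d‖²_{C(X×X)} t / T; consequently |k_T(Φ^t(x), Φ^t(x')) − k_T(x, x')| ≤ 2 ‖h‖_{C¹(ℝ₊)} ‖d‖²_{C(X×X)} t / T. -/
open MeasureTheory Filter Topology

/-- For all `x, x' ∈ X`, `t ≥ 0` and `T > 0`, the time-shifted finite-time
average satisfies `|d_T²(Φ^t(x), Φ^t(x')) − d_T²(x, x')| ≤ 2 ‖d‖²_{C(X×X)} t / T`; consequently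
`|k_T(Φ^t(x), Φ^t(x')) − k_T(x, x')| ≤ 2 ‖h‖_{C¹(ℝ₊)} ‖d‖²_{C(X×X)} t / T`. -/
theorem delay_distance_shift_bound
    {Ω : Type*} [MeasurableSpace Ω] [MetricSpace Ω] [BorelSpace Ω]
    {Y : Type*} [NormedAddCommGroup Y]
    (Φ : ℝ → Ω → Ω)
    (hΦcont : Continuous fun p : ℝ × Ω => Φ p.1 p.2)
    (hΦ0 : Φ 0 = id)
    (hΦadd : ∀ s t : ℝ, Φ (s + t) = Φ s ∘ Φ t)
    (X : Set Ω) (hXcomp : IsCompact X)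
    (hXinv : ∀ t : ℝ, Set.MapsTo (Φ t) X X)
    (F : Ω → Y) (hF : Continuous F)
    (d : Ω → Ω → ℝ) (hd : ∀ x x', d x x' = ‖F x - F x'‖)
    (dT2 : ℝ → Ω → Ω → ℝ)
    (hdT2 : ∀ (T : ℝ) (x x'), dT2 T x x' =
      (1 / T) * ∫ s in (0:ℝ)..T, (d (Φ s x) (Φ s x')) ^ 2)
    (h : ℝ → ℝ) (hhpos : ∀ u : ℝ, 0 ≤ u → 0 < h u)
    (hhC1 : ContDiff ℝ 1 h)
    (hhbdd : ∃ C, ∀ u : ℝ, 0 ≤ u → |h u| ≤ C)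
    (hh'bdd : ∃ C, ∀ u : ℝ, 0 ≤ u → |deriv h u| ≤ C)
    (kT : ℝ → Ω → Ω → ℝ) (hkT : ∀ (T : ℝ) (x x'), kT T x x' = h (dT2 T x x'))
    (hC1norm d2supX : ℝ)
    (hhC1norm : hC1norm =
      (⨆ u : {u : ℝ // 0 ≤ u}, |h u|) + ⨆ u : {u : ℝ // 0 ≤ u}, |deriv h u|)
    (hd2supX : d2supX = ⨆ x : X, ⨆ y : X, (d x y) ^ 2) :
    ∀ x ∈ X, ∀ x' ∈ X, ∀ t : ℝ, 0 ≤ t → ∀ T : ℝ, 0 < T →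
      |dT2 T (Φ t x) (Φ t x') - dT2 T x x'| ≤ 2 * d2supX * t / T ∧
      |kT T (Φ t x) (Φ t x') - kT T x x'| ≤ 2 * hC1norm * d2supX * t / T := by
  intro x hx x' hx' t ht T hT
  set g : ℝ → ℝ := fun s => ‖F (Φ s x) - F (Φ s x')‖ ^ 2 with hg
  have h1 : Continuous fun s : ℝ => Φ s x :=
    hΦcont.comp (continuous_id.prodMk continuous_const)
  have h2 : Continuous fun s : ℝ => Φ s x' :=
    hΦcont.comp (continuous_id.prodMk continuous_const)
  have hgc : Continuous g := ((hF.comp h1).sub (hF.comp h2)).norm.pow 2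
  have hgnn : ∀ s, 0 ≤ g s := fun s => sq_nonneg _
  -- a global bound on the squared distance on X × X
  obtain ⟨M0, hM0⟩ : ∃ M0, ∀ a ∈ X, ∀ b ∈ X, ‖F a - F b‖ ^ 2 ≤ M0 := by
    have hc : ContinuousOn (fun p : Ω × Ω => ‖F p.1 - F p.2‖ ^ 2) (X ×ˢ X) :=
      (((hF.comp continuous_fst).sub (hF.comp continuous_snd)).norm.pow 2).continuousOn
    obtain ⟨M0, hM0⟩ := (hXcomp.prod hXcomp).exists_bound_of_continuousOn hc
    refine ⟨M0, fun a ha b hb => ?_⟩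
    have := hM0 (a, b) ⟨ha, hb⟩
    calc ‖F a - F b‖ ^ 2 ≤ ‖‖F a - F b‖ ^ 2‖ := le_abs_self _
      _ ≤ M0 := this
  haveI : Nonempty X := ⟨⟨x, hx⟩⟩
  have hbdd_inner : ∀ a : X, BddAbove (Set.range fun y : X => (d (a : Ω) (y : Ω)) ^ 2) := by
    rintro a
    refine ⟨M0, ?_⟩
    rintro _ ⟨y, rfl⟩
    show (d (a : Ω) (y : Ω)) ^ 2 ≤ M0
    rw [hd]
    exact hM0 a a.2 y y.2
  have hkey : ∀ a ∈ X, ∀ b ∈ X, ‖F a - F b‖ ^ 2 ≤ d2supX := by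
    intro a ha b hb
    rw [hd2supX]
    have h1' : ‖F a - F b‖ ^ 2 ≤ ⨆ y : X, (d a (y : Ω)) ^ 2 := by
      have := le_ciSup (hbdd_inner ⟨a, ha⟩) ⟨b, hb⟩
      rwa [hd] at this
    refine h1'.trans ?_
    have hbdd_outer : BddAbove (Set.range fun a : X => ⨆ y : X, (d (a : Ω) (y : Ω)) ^ 2) := by
      refine ⟨M0, ?_⟩
      rintro _ ⟨a, rfl⟩
      show (⨆ y : X, (d (a : Ω) (y : Ω)) ^ 2) ≤ M0
      refine ciSup_le fun y => ?_
      rw [hd]; exact hM0 a a.2 y y.2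
    exact le_ciSup hbdd_outer ⟨a, ha⟩
  have hgle : ∀ s : ℝ, g s ≤ d2supX := fun s =>
    hkey _ (hXinv s hx) _ (hXinv s hx')
  have hM : 0 ≤ d2supX := (hgnn 0).trans (hgle 0)
  -- rewrite the two averages
  have hbase : dT2 T x x' = (1 / T) * ∫ s in (0:ℝ)..T, g s := by
    rw [hdT2]
    congr 1
    refine intervalIntegral.integral_congr fun s _ => ?_
    rw [hd]
  have hshift : dT2 T (Φ t x) (Φ t x') = (1 / T) * ∫ s in t..(T + t), g s := by
    rw [hdT2]
    congr 1
    have heq : ∀ s : ℝ, (d (Φ s (Φ t x)) (Φ s (Φ t x'))) ^ 2 = g (s + t) := by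
      intro s
      rw [hd, hg]
      simp only
      rw [show Φ s (Φ t x) = Φ (s + t) x by rw [hΦadd]; rfl,
        show Φ s (Φ t x') = Φ (s + t) x' by rw [hΦadd]; rfl]
    rw [intervalIntegral.integral_congr (g := fun s => g (s + t)) fun s _ => heq s,
      intervalIntegral.integral_comp_add_right, zero_add]
  have hgint : ∀ a b : ℝ, IntervalIntegrable g MeasureTheory.volume a b := fun a b =>
    hgc.intervalIntegrable a b
  have hsplit : (∫ s in t..(T + t), g s) - ∫ s in (0:ℝ)..T, g s
      = (∫ s in T..(T + t), g s) - ∫ s in (0:ℝ)..t, g s := by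
    have e1 : (∫ s in (0:ℝ)..t, g s) + ∫ s in t..(T + t), g s = ∫ s in (0:ℝ)..(T + t), g s :=
      intervalIntegral.integral_add_adjacent_intervals (hgint 0 t) (hgint t (T + t))
    have e2 : (∫ s in (0:ℝ)..T, g s) + ∫ s in T..(T + t), g s = ∫ s in (0:ℝ)..(T + t), g s :=
      intervalIntegral.integral_add_adjacent_intervals (hgint 0 T) (hgint T (T + t))
    linarith
  have hbound1 : |∫ s in T..(T + t), g s| ≤ d2supX * t := by
    have := intervalIntegral.norm_integral_le_of_norm_le_const
      (f := g) (a := T) (b := T + t) (C := d2supX)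
      (fun s _ => by rw [Real.norm_eq_abs, abs_of_nonneg (hgnn s)]; exact hgle s)
    simpa [abs_of_nonneg ht] using this
  have hbound2 : |∫ s in (0:ℝ)..t, g s| ≤ d2supX * t := by
    have := intervalIntegral.norm_integral_le_of_norm_le_const
      (f := g) (a := 0) (b := t) (C := d2supX)
      (fun s _ => by rw [Real.norm_eq_abs, abs_of_nonneg (hgnn s)]; exact hgle s)
    simpa [abs_of_nonneg ht] using this
  have hdT2diff : |dT2 T (Φ t x) (Φ t x') - dT2 T x x'| ≤ 2 * d2supX * t / T := by
    rw [hshift, hbase, ← mul_sub, hsplit, abs_mul, abs_of_nonneg (by positivity : (0:ℝ) ≤ 1 / T)]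
    have : |(∫ s in T..(T + t), g s) - ∫ s in (0:ℝ)..t, g s| ≤ 2 * d2supX * t := by
      calc |(∫ s in T..(T + t), g s) - ∫ s in (0:ℝ)..t, g s|
          ≤ |∫ s in T..(T + t), g s| + |∫ s in (0:ℝ)..t, g s| := abs_sub _ _
        _ ≤ d2supX * t + d2supX * t := add_le_add hbound1 hbound2
        _ = 2 * d2supX * t := by ring
    calc 1 / T * |(∫ s in T..(T + t), g s) - ∫ s in (0:ℝ)..t, g s|
        ≤ 1 / T * (2 * d2supX * t) := by
          exact mul_le_mul_of_nonneg_left this (by positivity)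
      _ = 2 * d2supX * t / T := by ring
  refine ⟨hdT2diff, ?_⟩
  -- second part
  have ha0 : 0 ≤ dT2 T (Φ t x) (Φ t x') := by
    rw [hshift]
    have : 0 ≤ ∫ s in t..(T + t), g s :=
      intervalIntegral.integral_nonneg (by linarith) fun u _ => hgnn u
    positivity
  have hb0 : 0 ≤ dT2 T x x' := by
    rw [hbase]
    have : 0 ≤ ∫ s in (0:ℝ)..T, g s :=
      intervalIntegral.integral_nonneg hT.le fun u _ => hgnn u
    positivity
  set C' := ⨆ u : {u : ℝ // 0 ≤ u}, |deriv h u| with hC'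
  obtain ⟨Cd, hCd⟩ := hh'bdd
  have hC'bdd : BddAbove (Set.range fun u : {u : ℝ // 0 ≤ u} => |deriv h (u : ℝ)|) := by
    refine ⟨Cd, ?_⟩
    rintro _ ⟨u, rfl⟩
    exact hCd u u.2
  have hderiv_le : ∀ u : ℝ, 0 ≤ u → |deriv h u| ≤ C' := fun u hu =>
    le_ciSup hC'bdd ⟨u, hu⟩
  have hmvt : |h (dT2 T (Φ t x) (Φ t x')) - h (dT2 T x x')|
      ≤ C' * |dT2 T (Φ t x) (Φ t x') - dT2 T x x'| := by
    have := Convex.norm_image_sub_le_of_norm_deriv_le (s := Set.Ici (0:ℝ))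
      (f := h) (C := C')
      (fun u _ => (hhC1.differentiable one_ne_zero).differentiableAt)
      (fun u hu => by rw [Real.norm_eq_abs]; exact hderiv_le u hu)
      (convex_Ici 0) hb0 ha0
    simpa [Real.norm_eq_abs] using this
  have hC'le : C' ≤ hC1norm := by
    rw [hhC1norm]
    have hnn : 0 ≤ ⨆ u : {u : ℝ // 0 ≤ u}, |h (u : ℝ)| := by
      obtain ⟨Ch, hCh⟩ := hhbdd
      have hb : BddAbove (Set.range fun u : {u : ℝ // 0 ≤ u} => |h (u : ℝ)|) :=
        ⟨Ch, by rintro _ ⟨u, rfl⟩; exact hCh u u.2⟩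
      exact (abs_nonneg (h 0)).trans (le_ciSup hb ⟨0, le_rfl⟩)
    linarith
  rw [hkT, hkT]
  calc |h (dT2 T (Φ t x) (Φ t x')) - h (dT2 T x x')|
      ≤ C' * |dT2 T (Φ t x) (Φ t x') - dT2 T x x'| := hmvt
    _ ≤ hC1norm * (2 * d2supX * t / T) := by
        have h0 : 0 ≤ |dT2 T (Φ t x) (Φ t x') - dT2 T x x'| := abs_nonneg _
        have hC'0 : 0 ≤ C' := (abs_nonneg _).trans (hderiv_le 0 le_rfl)
        calc C' * |dT2 T (Φ t x) (Φ t x') - dT2 T x x'|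
            ≤ C' * (2 * d2supX * t / T) := mul_le_mul_of_nonneg_left hdT2diff hC'0
          _ ≤ hC1norm * (2 * d2supX * t / T) :=
              mul_le_mul_of_nonneg_right hC'le (by positivity)
    _ = 2 * hC1norm * d2supX * t / T := by ring
end

section
/- Let k : Ω × Ω → ℝ be a continuous kernel, K the associated integral operator K f = ∫_Ω k(·,x) f(x) dμ(x) on L²(μ), and U^t the Koopman operator of a flow Φ^t preserving the probability measure μ supported on the compact set X. Then for every f ∈ L²(μ), ‖U^t K f − K U^t f‖_{L²(μ)} ≤ sup_{(x,x') ∈ X×X} |k(Φ^t(x), Φ^t(x')) − k(x, x')| · ‖f‖_{L²(μ)}; hence ‖[U^t, K]‖ ≤ ‖k ∘ (Φ^t × Φ^t) − k‖_{C(X×X)}. -/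
open MeasureTheory Filter Topology

/-- Let `k : Ω × Ω → ℝ` be a continuous kernel, `K` the associated integral
operator `K f = ∫ k(·,x) f(x) dμ(x)` on `L²(μ)`, and `U^t` the Koopman operator of a flow `Φ^t`
preserving the probability measure `μ` supported on the compact set `X`.  Then for every
`f ∈ L²(μ)`,
`‖U^t K f − K U^t f‖ ≤ sup_{(x,x') ∈ X×X} |k(Φ^t(x), Φ^t(x')) − k(x,x')| ⬝ ‖f‖`;
hence `‖[U^t, K]‖ ≤ ‖k ∘ (Φ^t × Φ^t) − k‖_{C(X×X)}`. -/
theorem integral_operator_commutator_sup_bound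
    {Ω : Type*} [MeasurableSpace Ω] [MetricSpace Ω] [BorelSpace Ω]
    (μ : Measure Ω) [IsProbabilityMeasure μ]
    (Φ : ℝ → Ω → Ω)
    (hΦcont : Continuous fun p : ℝ × Ω => Φ p.1 p.2)
    (hΦ0 : Φ 0 = id)
    (hΦadd : ∀ s t : ℝ, Φ (s + t) = Φ s ∘ Φ t)
    (hΦmp : ∀ t : ℝ, MeasurePreserving (Φ t) μ μ)
    (X : Set Ω) (hXcomp : IsCompact X) (hXsupp : μ Xᶜ = 0)
    (hXinv : ∀ t : ℝ, Set.MapsTo (Φ t) X X)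
    (k : Ω → Ω → ℝ) (hk : Continuous fun p : Ω × Ω => k p.1 p.2)
    (K : Lp ℂ 2 μ →L[ℂ] Lp ℂ 2 μ)
    (hK : ∀ f : Lp ℂ 2 μ, ∀ᵐ x ∂μ, K f x = ∫ y, (k x y : ℂ) * f y ∂μ)
    (U : ℝ → Lp ℂ 2 μ →L[ℂ] Lp ℂ 2 μ)
    (hU : ∀ (t : ℝ) (f : Lp ℂ 2 μ), ∀ᵐ x ∂μ, U t f x = f (Φ t x)) :
    ∀ t : ℝ,
      (∀ f : Lp ℂ 2 μ,
        ‖U t (K f) - K (U t f)‖ ≤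
          (⨆ x : X, ⨆ y : X, |k (Φ t x) (Φ t y) - k x y|) * ‖f‖) ∧
      ‖(U t).comp K - K.comp (U t)‖ ≤
        ⨆ x : X, ⨆ y : X, |k (Φ t x) (Φ t y) - k x y| := by
  intro t
  -- Basic continuity facts
  have hΦtc : ∀ s : ℝ, Continuous (Φ s) := fun s =>
    hΦcont.comp (continuous_const.prodMk continuous_id)
  have hΦinv : ∀ s : ℝ, ∀ x, Φ (-s) (Φ s x) = x := by
    intro s x
    have : Φ (-s + s) x = x := by rw [neg_add_cancel, hΦ0]; rfl
    rw [hΦadd] at this; exact this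
  -- `Φ t` as a homeomorphism, hence a measurable embedding
  have hΦmeas : MeasurableEmbedding (Φ t) := by
    exact Homeomorph.measurableEmbedding
      { toFun := Φ t
        invFun := Φ (-t)
        left_inv := hΦinv t
        right_inv := fun x => by
          have := hΦinv (-t) x; rwa [neg_neg] at this
        continuous_toFun := hΦtc t
        continuous_invFun := hΦtc (-t) }
  -- X is nonempty
  have hXne : X.Nonempty := by
    rcases Set.eq_empty_or_nonempty X with h | h
    · exfalso
      have : μ Xᶜ = 1 := by rw [h, Set.compl_empty, measure_univ]
      rw [hXsupp] at this; norm_num at this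
    · exact h
  haveI : Nonempty X := hXne.to_subtype
  -- the continuous "difference" function
  set F : Ω × Ω → ℝ := fun p => |k (Φ t p.1) (Φ t p.2) - k p.1 p.2| with hF
  have hFcont : Continuous F := by
    apply Continuous.abs
    exact (hk.comp (((hΦtc t).comp continuous_fst).prodMk
      ((hΦtc t).comp continuous_snd))).sub hk
  obtain ⟨B, hB⟩ := (hXcomp.prod hXcomp).exists_bound_of_continuousOn hFcont.continuousOn
  set C : ℝ := ⨆ x : X, ⨆ y : X, |k (Φ t x) (Φ t y) - k x y| with hCdef
  have inner_bdd : ∀ x : X, BddAbove (Set.range fun y : X => |k (Φ t x) (Φ t y) - k x y|) := by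
    intro x
    refine ⟨B, ?_⟩
    rintro r ⟨y, rfl⟩
    have := hB (x, y) ⟨x.2, y.2⟩
    simpa [hF] using (le_abs_self _).trans this
  have outer_bdd : BddAbove (Set.range fun x : X =>
      ⨆ y : X, |k (Φ t x) (Φ t y) - k x y|) := by
    refine ⟨B, ?_⟩
    rintro r ⟨x, rfl⟩
    refine ciSup_le fun y => ?_
    have := hB (x, y) ⟨x.2, y.2⟩
    simpa [hF] using (le_abs_self _).trans this
  have Hsup : ∀ x ∈ X, ∀ y ∈ X, |k (Φ t x) (Φ t y) - k x y| ≤ C := by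
    intro x hx y hy
    have h1 : |k (Φ t x) (Φ t y) - k x y| ≤
        ⨆ y : X, |k (Φ t (⟨x, hx⟩ : X)) (Φ t y) - k (⟨x, hx⟩ : X) y| :=
      le_ciSup (inner_bdd ⟨x, hx⟩) ⟨y, hy⟩
    exact h1.trans (le_ciSup outer_bdd ⟨x, hx⟩)
  have hC0 : 0 ≤ C := by
    obtain ⟨x₀, hx₀⟩ := hXne
    exact (abs_nonneg _).trans (Hsup x₀ hx₀ x₀ hx₀)
  have hXae : ∀ᵐ x ∂μ, x ∈ X := by
    rw [ae_iff]
    exact hXsupp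
  -- main estimate
  have key : ∀ f : Lp ℂ 2 μ, ‖U t (K f) - K (U t f)‖ ≤ C * ‖f‖ := by
    intro f
    set g : Ω → ℂ := fun y => f (Φ t y) with hg
    have hf_int : Integrable (f : Ω → ℂ) μ :=
      memLp_one_iff_integrable.mp ((Lp.memLp f).mono_exponent (by norm_num))
    have hg_int : Integrable g μ := by
      have : Integrable (f : Ω → ℂ) (Measure.map (Φ t) μ) := by
        rwa [(hΦmp t).map_eq]
      exact this.comp_measurable (hΦtc t).measurable
    have hg_meas : AEStronglyMeasurable g μ := hg_int.1
    -- integrability of bounded-kernel products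
    have hint : ∀ h : Ω → ℝ, Continuous h → Integrable (fun y => (h y : ℂ) * g y) μ := by
      intro h hc
      obtain ⟨M, hM⟩ := hXcomp.exists_bound_of_continuousOn hc.continuousOn
      refine Integrable.mono' (hg_int.norm.const_mul M)
        ((Complex.continuous_ofReal.comp hc).aestronglyMeasurable.mul hg_meas) ?_
      filter_upwards [hXae] with y hy
      have : ‖h y‖ ≤ M := hM y hy
      calc ‖(h y : ℂ) * g y‖ = ‖h y‖ * ‖g y‖ := by
            rw [norm_mul, Complex.norm_real]
        _ ≤ M * ‖g y‖ := by
            exact mul_le_mul_of_nonneg_right this (norm_nonneg _)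
    -- ∫‖g‖ ≤ ‖f‖
    have hgnorm : ∫ y, ‖g y‖ ∂μ ≤ ‖f‖ := by
      have h1 : ∫ y, ‖g y‖ ∂μ = ∫ z, ‖f z‖ ∂μ :=
        (hΦmp t).integral_comp hΦmeas fun z => ‖f z‖
      have h2 : ∫ z, ‖f z‖ ∂μ = (eLpNorm (f : Ω → ℂ) 1 μ).toReal := by
        rw [integral_norm_eq_lintegral_enorm (Lp.aestronglyMeasurable f),
          eLpNorm_one_eq_lintegral_enorm]
      have h3 : eLpNorm (f : Ω → ℂ) 1 μ ≤ eLpNorm (f : Ω → ℂ) 2 μ :=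
        eLpNorm_le_eLpNorm_of_exponent_le (by norm_num) (Lp.aestronglyMeasurable f)
      rw [h1, h2, Lp.norm_def]
      exact ENNReal.toReal_mono (Lp.eLpNorm_ne_top f) h3
    -- pointwise a.e. bound on the commutator
    have hmain : ∀ᵐ x ∂μ, ‖(U t (K f) - K (U t f) : Lp ℂ 2 μ) x‖ ≤ C * ‖f‖ := by
      have h1 := hU t (K f)
      have h2 : ∀ᵐ x ∂μ, (K f : Ω → ℂ) (Φ t x) = ∫ y, (k (Φ t x) y : ℂ) * f y ∂μ := by
        have := hK f
        have hmap : ∀ᵐ z ∂(Measure.map (Φ t) μ), (K f : Ω → ℂ) z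
            = ∫ y, (k z y : ℂ) * f y ∂μ := by
          rwa [(hΦmp t).map_eq]
        exact ae_of_ae_map (hΦtc t).measurable.aemeasurable hmap
      have h3 := hK (U t f)
      have h4 : ∀ x : Ω, ∫ y, (k x y : ℂ) * (U t f) y ∂μ = ∫ y, (k x y : ℂ) * g y ∂μ := by
        intro x
        refine integral_congr_ae ?_
        filter_upwards [hU t f] with y hy
        rw [hy]
      have h5 : ∀ x : Ω, ∫ y, (k x y : ℂ) * f y ∂μ
          = ∫ y, (k x (Φ t y) : ℂ) * g y ∂μ := by
        intro x
        exact ((hΦmp t).integral_comp hΦmeas fun z => (k x z : ℂ) * f z).symm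
      filter_upwards [Lp.coeFn_sub (U t (K f)) (K (U t f)), h1, h2, h3, hXae]
        with x hsub hx1 hx2 hx3 hxX
      have hA : Integrable (fun y => (k (Φ t x) (Φ t y) : ℂ) * g y) μ :=
        hint (fun z => k (Φ t x) (Φ t z))
          (hk.comp (continuous_const.prodMk (hΦtc t)))
      have hBint : Integrable (fun y => (k x y : ℂ) * g y) μ :=
        hint (k x) (hk.comp (continuous_const.prodMk continuous_id))
      rw [hsub, Pi.sub_apply, hx1, hx2, hx3, h4, h5]
      calc ‖(∫ y, (k (Φ t x) (Φ t y) : ℂ) * g y ∂μ) - ∫ y, (k x y : ℂ) * g y ∂μ‖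
          = ‖∫ y, ((k (Φ t x) (Φ t y) : ℂ) * g y - (k x y : ℂ) * g y) ∂μ‖ := by
            rw [integral_sub hA hBint]
        _ ≤ ∫ y, ‖(k (Φ t x) (Φ t y) : ℂ) * g y - (k x y : ℂ) * g y‖ ∂μ :=
            norm_integral_le_integral_norm _
        _ ≤ ∫ y, C * ‖g y‖ ∂μ := by
            refine integral_mono_ae (hA.sub hBint).norm (hg_int.norm.const_mul C) ?_
            filter_upwards [hXae] with y hyX
            have heq : (k (Φ t x) (Φ t y) : ℂ) * g y - (k x y : ℂ) * g y
                = ((k (Φ t x) (Φ t y) - k x y : ℝ) : ℂ) * g y := by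
              push_cast; ring
            rw [heq, norm_mul, Complex.norm_real, Real.norm_eq_abs]
            exact mul_le_mul_of_nonneg_right (Hsup x hxX y hyX) (norm_nonneg _)
        _ = C * ∫ y, ‖g y‖ ∂μ := integral_const_mul _ _
        _ ≤ C * ‖f‖ := mul_le_mul_of_nonneg_left hgnorm hC0
    have := Lp.norm_le_of_ae_bound (mul_nonneg hC0 (norm_nonneg f)) hmain
    simpa [measureUnivNNReal, measure_univ] using this
  refine ⟨key, ?_⟩
  refine ContinuousLinearMap.opNorm_le_bound _ hC0 fun f => ?_
  have : ((U t).comp K - K.comp (U t)) f = U t (K f) - K (U t f) := by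
    simp [ContinuousLinearMap.sub_apply, ContinuousLinearMap.comp_apply]
  rw [this]
  exact key f
end

section
/- Let ν be a probability measure on Ω and κ : Ω × Ω → ℝ a bounded measurable symmetric kernel bounded below by a positive constant. Define u(x) = ∫_Ω κ(x, y) dν(y), v(x) = ∫_Ω κ(x, y)/u(y) dν(y), and k(x, x') = ∫_Ω κ(x, y) κ(y, x') / (u(x) v(y) u(x')) dν(y). Then k is symmetric, strictly positive, and Markov: ∫_Ω k(x, x') dν(x') = 1 for every x ∈ Ω. -/
open MeasureTheory

lemma integrable_of_bounds' {Ω : Type*} [MeasurableSpace Ω] (ν : Measure Ω)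
    [IsProbabilityMeasure ν] {f : Ω → ℝ} (hf : AEStronglyMeasurable f ν)
    {m M : ℝ} (hm : ∀ x, m ≤ f x) (hM : ∀ x, f x ≤ M) : Integrable f ν := by
  refine (integrable_const (max |m| |M|)).mono' hf ?_
  filter_upwards with x
  rw [Real.norm_eq_abs, abs_le]
  refine ⟨?_, (hM x).trans ((le_abs_self M).trans (le_max_right _ _))⟩
  calc -max |m| |M| ≤ -|m| := neg_le_neg (le_max_left _ _)
    _ ≤ m := neg_abs_le m
    _ ≤ f x := hm x

/-- Let `ν` be a probability measure on `Ω` and `κ : Ω × Ω → ℝ` a bounded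
measurable symmetric kernel bounded below by a positive constant.  Define
`u(x) = ∫ κ(x,y) dν(y)`, `v(x) = ∫ κ(x,y)/u(y) dν(y)`, and
`k(x,x') = ∫ κ(x,y) κ(y,x') / (u(x) v(y) u(x')) dν(y)`.  Then `k` is symmetric, strictly
positive, and Markov: `∫ k(x,x') dν(x') = 1` for every `x ∈ Ω`. -/
theorem bistochastic_normalization_markov
    {Ω : Type*} [MeasurableSpace Ω]
    (ν : Measure Ω) [IsProbabilityMeasure ν]
    (κ : Ω → Ω → ℝ)
    (hκmeas : Measurable fun p : Ω × Ω => κ p.1 p.2)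
    (hκsymm : ∀ x y, κ x y = κ y x)
    (hκbdd : ∃ C : ℝ, ∀ x y, κ x y ≤ C)
    (c : ℝ) (hc : 0 < c) (hκlow : ∀ x y, c ≤ κ x y)
    (u v : Ω → ℝ) (k : Ω → Ω → ℝ)
    (hu : ∀ x, u x = ∫ y, κ x y ∂ν)
    (hv : ∀ x, v x = ∫ y, κ x y / u y ∂ν)
    (hk : ∀ x x', k x x' = ∫ y, κ x y * κ y x' / (u x * v y * u x') ∂ν) :
    (∀ x x', k x x' = k x' x) ∧
    (∀ x x', 0 < k x x') ∧
    (∀ x, ∫ x', k x x' ∂ν = 1) := by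
  obtain ⟨C0, hC0⟩ := hκbdd
  set C : ℝ := max C0 c with hCdef
  have hCub : ∀ x y, κ x y ≤ C := fun x y => (hC0 x y).trans (le_max_left _ _)
  have hcC : c ≤ C := le_max_right _ _
  have hCpos : 0 < C := hc.trans_le hcC
  -- measurability of sections of κ
  have hκm1 : ∀ x, Measurable (fun y => κ x y) :=
    fun x => hκmeas.comp measurable_prodMk_left
  have hκm2 : ∀ x', Measurable (fun y => κ y x') :=
    fun x' => hκmeas.comp measurable_prodMk_right
  -- measurability of u
  have hum : Measurable u := by
    have h : (fun x => ∫ y, κ x y ∂ν) = u := funext fun x => (hu x).symm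
    rw [← h]
    exact (hκmeas.stronglyMeasurable.integral_prod_right').measurable
  -- integrability and bounds for u
  have hκint : ∀ x, Integrable (fun y => κ x y) ν :=
    fun x => integrable_of_bounds' ν (hκm1 x).aestronglyMeasurable (hκlow x) (hCub x)
  have hu_lb : ∀ x, c ≤ u x := fun x => by
    rw [hu x]
    calc c = ∫ _, c ∂ν := by simp
      _ ≤ _ := integral_mono (integrable_const c) (hκint x) (hκlow x)
  have hu_ub : ∀ x, u x ≤ C := fun x => by
    rw [hu x]
    calc ∫ y, κ x y ∂ν ≤ ∫ _, C ∂ν := integral_mono (hκint x) (integrable_const C) (hCub x)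
      _ = C := by simp
  have hu_pos : ∀ x, 0 < u x := fun x => hc.trans_le (hu_lb x)
  have hu_ne : ∀ x, u x ≠ 0 := fun x => (hu_pos x).ne'
  -- measurability of v
  have hvm : Measurable v := by
    have h : (fun x => ∫ y, κ x y / u y ∂ν) = v := funext fun x => (hv x).symm
    rw [← h]
    exact ((hκmeas.div (hum.comp measurable_snd)).stronglyMeasurable.integral_prod_right').measurable
  -- bounds for v
  have hvi_lb : ∀ x y, c / C ≤ κ x y / u y := fun x y =>
    div_le_div₀ (hc.le.trans (hκlow x y)) (hκlow x y) (hu_pos y) (hu_ub y)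
  have hvi_ub : ∀ x y, κ x y / u y ≤ C / c := fun x y =>
    div_le_div₀ hCpos.le (hCub x y) hc (hu_lb y)
  have hvint : ∀ x, Integrable (fun y => κ x y / u y) ν := fun x =>
    integrable_of_bounds' ν ((hκm1 x).div hum).aestronglyMeasurable (hvi_lb x) (hvi_ub x)
  have hv_lb : ∀ x, c / C ≤ v x := fun x => by
    rw [hv x]
    calc c / C = ∫ _, c / C ∂ν := by simp
      _ ≤ _ := integral_mono (integrable_const _) (hvint x) (hvi_lb x)
  have hv_ub : ∀ x, v x ≤ C / c := fun x => by
    rw [hv x]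
    calc ∫ y, κ x y / u y ∂ν ≤ ∫ _, C / c ∂ν :=
          integral_mono (hvint x) (integrable_const _) (hvi_ub x)
      _ = C / c := by simp
  have hv_pos : ∀ x, 0 < v x := fun x => (div_pos hc hCpos).trans_le (hv_lb x)
  have hv_ne : ∀ x, v x ≠ 0 := fun x => (hv_pos x).ne'
  -- bounds on the k-integrand
  set ε : ℝ := c * c / (C * (C / c) * C) with hεdef
  set M : ℝ := C * C / (c * (c / C) * c) with hMdef
  have hεpos : 0 < ε := by positivity
  have hgi_lb : ∀ x x' y, ε ≤ κ x y * κ y x' / (u x * v y * u x') := by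
    intro x x' y
    have h1 := hu_pos x
    have h2 := hv_pos y
    have h3 := hu_pos x'
    have h4 := hc.trans_le (hκlow x y)
    have h5 := hc.trans_le (hκlow y x')
    have h6 := hκlow x y
    have h7 := hκlow y x'
    have h8 := hu_ub x
    have h9 := hv_ub y
    have h10 := hu_ub x'
    have h11 := hu_lb x
    have h12 := hv_lb y
    have h13 := hu_lb x'
    have h14 := hCub x y
    have h15 := hCub y x'
    rw [hεdef]
    gcongr
  have hgi_ub : ∀ x x' y, κ x y * κ y x' / (u x * v y * u x') ≤ M := by
    intro x x' y
    have h1 := hu_pos x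
    have h2 := hv_pos y
    have h3 := hu_pos x'
    have h4 := hc.trans_le (hκlow x y)
    have h5 := hc.trans_le (hκlow y x')
    have h6 := hκlow x y
    have h7 := hκlow y x'
    have h8 := hu_ub x
    have h9 := hv_ub y
    have h10 := hu_ub x'
    have h11 := hu_lb x
    have h12 := hv_lb y
    have h13 := hu_lb x'
    have h14 := hCub x y
    have h15 := hCub y x'
    rw [hMdef]
    gcongr
  have hgm : ∀ x x', Measurable (fun y => κ x y * κ y x' / (u x * v y * u x')) := by
    intro x x'
    exact ((hκm1 x).mul (hκm2 x')).div
      ((measurable_const.mul hvm).mul measurable_const)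
  have hgint : ∀ x x', Integrable (fun y => κ x y * κ y x' / (u x * v y * u x')) ν :=
    fun x x' => integrable_of_bounds' ν (hgm x x').aestronglyMeasurable
      (hgi_lb x x') (hgi_ub x x')
  refine ⟨?_, ?_, ?_⟩
  · -- symmetry
    intro x x'
    rw [hk, hk]
    refine integral_congr_ae (Filter.Eventually.of_forall fun y => ?_)
    show κ x y * κ y x' / (u x * v y * u x') = κ x' y * κ y x / (u x' * v y * u x)
    rw [hκsymm x y, hκsymm y x']
    ring
  · -- positivity
    intro x x'
    rw [hk]
    calc (0 : ℝ) < ε := hεpos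
      _ = ∫ _, ε ∂ν := by simp
      _ ≤ _ := integral_mono (integrable_const ε) (hgint x x') (hgi_lb x x')
  · -- Markov property
    intro x
    have hFm : Measurable (fun p : Ω × Ω => κ x p.2 * κ p.2 p.1 / (u x * v p.2 * u p.1)) := by
      exact (((hκm1 x).comp measurable_snd).mul
        (hκmeas.comp (measurable_snd.prodMk measurable_fst))).div
        ((measurable_const.mul (hvm.comp measurable_snd)).mul (hum.comp measurable_fst))
    have hFint : Integrable
        (Function.uncurry fun x' y => κ x y * κ y x' / (u x * v y * u x')) (ν.prod ν) := by
      refine integrable_of_bounds' (ν.prod ν) hFm.aestronglyMeasurable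
        (m := ε) (M := M) ?_ ?_
      · exact fun p => hgi_lb x p.1 p.2
      · exact fun p => hgi_ub x p.1 p.2
    calc ∫ x', k x x' ∂ν
        = ∫ x', ∫ y, κ x y * κ y x' / (u x * v y * u x') ∂ν ∂ν := by
          exact integral_congr_ae (Filter.Eventually.of_forall fun x' => by rw [hk])
      _ = ∫ y, ∫ x', κ x y * κ y x' / (u x * v y * u x') ∂ν ∂ν :=
          integral_integral_swap hFint
      _ = ∫ y, κ x y / (u x * v y) * v y ∂ν := by
          refine integral_congr_ae (Filter.Eventually.of_forall fun y => ?_)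
          calc ∫ x', κ x y * κ y x' / (u x * v y * u x') ∂ν
              = ∫ x', κ x y / (u x * v y) * (κ y x' / u x') ∂ν := by
                refine integral_congr_ae (Filter.Eventually.of_forall fun x' => ?_)
                show κ x y * κ y x' / (u x * v y * u x') = κ x y / (u x * v y) * (κ y x' / u x')
                rw [div_mul_div_comm]
            _ = κ x y / (u x * v y) * ∫ x', κ y x' / u x' ∂ν := integral_const_mul _ _
            _ = κ x y / (u x * v y) * v y := by rw [← hv y]
      _ = ∫ y, κ x y * (u x)⁻¹ ∂ν := by
          refine integral_congr_ae (Filter.Eventually.of_forall fun y => ?_)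
          show κ x y / (u x * v y) * v y = κ x y * (u x)⁻¹
          rw [div_mul_eq_mul_div, mul_comm (u x) (v y), ← div_div, mul_div_assoc,
            div_self (hv_ne y), mul_one, div_eq_mul_inv]
      _ = (∫ y, κ x y ∂ν) * (u x)⁻¹ := integral_mul_const _ _
      _ = u x * (u x)⁻¹ := by rw [← hu x]
      _ = 1 := mul_inv_cancel₀ (hu_ne x)
end
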